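/- arXiv:0902.2250 — 5 statements merged into one kernel-verified Lean document; each statement's English description precedes it below -/
import Mathlib

section
/- Let φ be a smooth function on the closure of a bounded open set Ω ⊂ ℝⁿ satisfying Δφ = |∇φ|² − V + λ₁ in Ω. If Δφ attains its maximum over the closure of Ω at an interior point x₀ ∈ Ω, then (Δφ(x₀))² ≤ (n/2) · sup_Ω ΔV. -/
open scoped RealInnerProductSpace
open Metric Real Set

/-- The Laplacian `Δf = ∑ i, ∂²f/∂xᵢ²` of a function on Euclidean space. -/
noncomputable def lap {n : ℕ} (f : EuclideanSpace ℝ (Fin n) → ℝ)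
    (x : EuclideanSpace ℝ (Fin n)) : ℝ :=
  ∑ i, fderiv ℝ (fun y => fderiv ℝ f y (EuclideanSpace.single i 1)) x (EuclideanSpace.single i 1)

/-- The Laplacian computed with derivatives within a set `s` (used for functions that are
only smooth up to the boundary of a domain). -/
noncomputable def lapWithin {n : ℕ} (s : Set (EuclideanSpace ℝ (Fin n)))
    (f : EuclideanSpace ℝ (Fin n) → ℝ) (x : EuclideanSpace ℝ (Fin n)) : ℝ :=
  ∑ i, fderivWithin ℝ (fun y => fderivWithin ℝ f s y (EuclideanSpace.single i 1)) s x
        (EuclideanSpace.single i 1)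

section AuxLemmas

open Topology Filter

local notation "e" i => EuclideanSpace.single i (1:ℝ)

private theorem aux_lapWithin_eq_lap {n : ℕ} {s : Set (EuclideanSpace ℝ (Fin n))}
    {f : EuclideanSpace ℝ (Fin n) → ℝ} {x : EuclideanSpace ℝ (Fin n)} (hs : s ∈ nhds x) :
    lapWithin s f x = lap f x := by
  unfold lapWithin lap
  refine Finset.sum_congr rfl fun i _ => ?_
  rw [fderivWithin_of_mem_nhds hs]
  have hev : (fun y => fderivWithin ℝ f s y (EuclideanSpace.single i 1))
      =ᶠ[nhds x] fun y => fderiv ℝ f y (EuclideanSpace.single i 1) := by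
    filter_upwards [interior_mem_nhds.2 hs] with y hy
    rw [fderivWithin_of_mem_nhds (mem_interior_iff_mem_nhds.1 hy)]
  rw [hev.fderiv_eq]

private theorem aux_contDiffAt_dderiv {E : Type*} [NormedAddCommGroup E] [NormedSpace ℝ E]
    {f : E → ℝ} {x : E} (v : E) (hf : ContDiffAt ℝ (⊤ : ℕ∞) f x) :
    ContDiffAt ℝ (⊤ : ℕ∞) (fun y => fderiv ℝ f y v) x := by
  have h1 : ContDiffAt ℝ (⊤ : ℕ∞) (fderiv ℝ f) x := hf.fderiv_right (le_refl _)
  exact ((ContinuousLinearMap.apply ℝ ℝ v).contDiff.contDiffAt).comp x h1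

private theorem aux_fderiv_symm {E : Type*} [NormedAddCommGroup E] [NormedSpace ℝ E]
    [CompleteSpace E] {f : E → ℝ} {x : E} (v w : E) (hf : ContDiffAt ℝ (⊤ : ℕ∞) f x) :
    fderiv ℝ (fun y => fderiv ℝ f y v) x w = fderiv ℝ (fun y => fderiv ℝ f y w) x v := by
  have hd : DifferentiableAt ℝ (fderiv ℝ f) x :=
    (hf.fderiv_right (m := (⊤ : ℕ∞)) (le_refl _)).differentiableAt (by simp)
  have h1 : ∀ u : E, fderiv ℝ (fun y => fderiv ℝ f y u) x
      = (ContinuousLinearMap.apply ℝ ℝ u).comp (fderiv ℝ (fderiv ℝ f) x) := fun u =>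
    ((ContinuousLinearMap.apply ℝ ℝ u).hasFDerivAt.comp x hd.hasFDerivAt).fderiv
  have hsym := hf.isSymmSndFDerivAt (by rw [minSmoothness_of_isRCLikeNormedField]; exact WithTop.coe_le_coe.2 (le_top : (2:ℕ∞) ≤ ⊤))
  rw [h1 v, h1 w]
  simpa using hsym w v

private theorem aux_secondDeriv_nonpos {g g' : ℝ → ℝ} {c : ℝ}
    (hg : ∀ᶠ t in nhds (0:ℝ), HasDerivAt g (g' t) t)
    (hg' : HasDerivAt g' c 0) (hmax : IsLocalMax g 0) : c ≤ 0 := by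
  by_contra hc
  push_neg at hc
  have hg'0 : g' 0 = 0 := by
    have h1 := hmax.deriv_eq_zero
    rwa [hg.self_of_nhds.deriv] at h1
  have hslope : Tendsto (slope g' 0) (𝓝[≠] (0:ℝ)) (nhds c) :=
    hasDerivAt_iff_tendsto_slope.1 hg'
  have hev : ∀ᶠ t in 𝓝[>] (0:ℝ), 0 < g' t := by
    have h2 : ∀ᶠ t in 𝓝[≠] (0:ℝ), 0 < slope g' 0 t :=
      hslope.eventually (eventually_gt_nhds hc)
    have h3 : ∀ᶠ t in 𝓝[>] (0:ℝ), 0 < slope g' 0 t :=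
      h2.filter_mono (nhdsWithin_mono _ fun t ht => ne_of_gt ht)
    filter_upwards [h3, self_mem_nhdsWithin] with t ht ht'
    have : slope g' 0 t = g' t / t := by simp [slope, hg'0, div_eq_inv_mul]
    rw [this] at ht
    have := mul_pos ht (show (0:ℝ) < t from ht')
    rwa [div_mul_cancel₀] at this
    exact ne_of_gt ht'
  obtain ⟨δ₁, hδ₁, h1⟩ := (nhdsGT_basis (0:ℝ)).eventually_iff.1 hev
  obtain ⟨δ₂, hδ₂, h2⟩ := Metric.eventually_nhds_iff_ball.1 (hg.and hmax)
  set δ := min δ₁ δ₂ / 2 with hδdef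
  have hδpos : 0 < δ := by positivity
  have hsub : Set.Icc (0:ℝ) δ ⊆ Metric.ball (0:ℝ) δ₂ := by
    intro t ht
    simp only [Metric.mem_ball, Real.dist_eq, abs_sub_comm, sub_zero]
    rw [abs_of_nonneg ht.1]
    calc t ≤ δ := ht.2
    _ < δ₂ := by
      rw [hδdef]; cases' le_total δ₁ δ₂ with h h <;>
        simp [min_eq_left, min_eq_right, h] <;> linarith
  have hcont : ContinuousOn g (Set.Icc 0 δ) := fun t ht =>
    ((h2 _ (hsub ht)).1.continuousAt).continuousWithinAt
  have hmono : StrictMonoOn g (Set.Icc 0 δ) := by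
    refine strictMonoOn_of_deriv_pos (convex_Icc 0 δ) hcont fun t ht => ?_
    rw [interior_Icc] at ht
    rw [(h2 _ (hsub ⟨le_of_lt ht.1, le_of_lt ht.2⟩)).1.deriv]
    refine h1 ⟨ht.1, lt_of_lt_of_le ht.2 ?_⟩
    rw [hδdef]; cases' le_total δ₁ δ₂ with h h <;>
      simp [min_eq_left, min_eq_right, h] <;> linarith
  have : g 0 < g δ := hmono ⟨le_refl 0, le_of_lt hδpos⟩ ⟨le_of_lt hδpos, le_refl δ⟩ hδpos
  exact absurd ((h2 _ (hsub ⟨le_of_lt hδpos, le_refl δ⟩)).2) (not_le.2 this)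

private theorem aux_fderiv2_dir_nonpos {E : Type*} [NormedAddCommGroup E] [NormedSpace ℝ E]
    {U : E → ℝ} {x₀ v : E}
    (hs : ∀ᶠ y in nhds x₀, ContDiffAt ℝ (⊤ : ℕ∞) U y) (hmax : IsLocalMax U x₀) :
    fderiv ℝ (fun y => fderiv ℝ U y v) x₀ v ≤ 0 := by
  set c : ℝ → E := fun t => x₀ + t • v with hcdef
  have hc : ∀ t : ℝ, HasDerivAt c v t := fun t => by
    simpa [hcdef] using (((hasDerivAt_id t).smul_const v).const_add x₀)
  have hcont : Continuous c := by fun_prop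
  have hc0 : c 0 = x₀ := by simp [hcdef]
  have htend : Tendsto c (nhds 0) (nhds x₀) := hc0 ▸ hcont.tendsto 0
  have hev : ∀ᶠ t in nhds (0:ℝ), ContDiffAt ℝ (⊤ : ℕ∞) U (c t) := htend.eventually hs
  have hg : ∀ᶠ t in nhds (0:ℝ), HasDerivAt (fun t => U (c t))
      ((fun t => fderiv ℝ U (c t) v) t) t := by
    filter_upwards [hev] with t ht
    exact (ht.differentiableAt (by simp)).hasFDerivAt.comp_hasDerivAt t (hc t)
  have hFd : DifferentiableAt ℝ (fun y => fderiv ℝ U y v) x₀ :=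
    (aux_contDiffAt_dderiv v hs.self_of_nhds).differentiableAt (by simp)
  have hg' : HasDerivAt (fun t => fderiv ℝ U (c t) v)
      (fderiv ℝ (fun y => fderiv ℝ U y v) x₀ v) 0 := by
    have h2 := (hc0 ▸ hFd.hasFDerivAt : HasFDerivAt _ _ (c 0))
    exact hc0 ▸ (h2.comp_hasDerivAt 0 (hc 0))
  have hgm : IsLocalMax (fun t => U (c t)) 0 := by
    have : ∀ᶠ t in nhds (0:ℝ), U (c t) ≤ U x₀ := htend.eventually hmax
    simpa [IsLocalMax, IsMaxFilter, hc0] using this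
  exact aux_secondDeriv_nonpos hg hg' hgm

private theorem aux_vec1_eq {n : ℕ} (v : EuclideanSpace ℝ (Fin n)) :
    (Fin.cons v (fun _ => v) : Fin 2 → EuclideanSpace ℝ (Fin n)) = fun _ => v := by
  funext j
  exact Fin.cases rfl (fun k => rfl) j

private theorem aux_vec0_eq {n : ℕ} (v : EuclideanSpace ℝ (Fin n)) :
    (Fin.cons v (0 : Fin 0 → EuclideanSpace ℝ (Fin n)) : Fin 1 → EuclideanSpace ℝ (Fin n))
      = fun _ => v := by
  funext j
  exact Fin.cases rfl (fun k => k.elim0) j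

private theorem aux_lap_eq_taylor {n : ℕ} {w : Set (EuclideanSpace ℝ (Fin n))} (hw : IsOpen w)
    {V : EuclideanSpace ℝ (Fin n) → ℝ}
    {p : EuclideanSpace ℝ (Fin n) → FormalMultilinearSeries ℝ (EuclideanSpace ℝ (Fin n)) ℝ}
    (hp : HasFTaylorSeriesUpToOn 2 V p w) {y : EuclideanSpace ℝ (Fin n)} (hy : y ∈ w) (i : Fin n) :
    fderiv ℝ (fun z => fderiv ℝ V z (e i)) y (e i) = p y 2 (fun _ => (e i)) := by
  have hfd : ∀ z ∈ w, fderiv ℝ V z (e i) = p z 1 (fun _ => (e i)) := by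
    intro z hz
    have h0 : HasFDerivAt (fun z' => p z' 0) (p z 1).curryLeft z :=
      (hp.fderivWithin 0 (by norm_num) z hz).hasFDerivAt (hw.mem_nhds hz)
    have hV : HasFDerivAt V
        ((continuousMultilinearCurryFin0 ℝ (EuclideanSpace ℝ (Fin n)) ℝ :
          (ContinuousMultilinearMap ℝ (fun _ : Fin 0 => EuclideanSpace ℝ (Fin n)) ℝ) →L[ℝ] ℝ
          ).comp (p z 1).curryLeft) z := by
      have hcomp := (continuousMultilinearCurryFin0 ℝ (EuclideanSpace ℝ (Fin n)) ℝ :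
          (ContinuousMultilinearMap ℝ (fun _ : Fin 0 => EuclideanSpace ℝ (Fin n)) ℝ) →L[ℝ] ℝ
          ).hasFDerivAt.comp z h0
      refine hcomp.congr_of_eventuallyEq ?_
      filter_upwards [hw.mem_nhds hz] with z' hz'
      exact (by simpa using (hp.zero_eq z' hz').symm :
        V z' = continuousMultilinearCurryFin0 ℝ (EuclideanSpace ℝ (Fin n)) ℝ (p z' 0))
    rw [hV.fderiv]
    show ((p z 1).curryLeft (e i)) 0 = _
    rw [ContinuousMultilinearMap.curryLeft_apply, aux_vec0_eq]
  have hev2 : (fun z => fderiv ℝ V z (e i)) =ᶠ[nhds y]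
      (fun z => p z 1 (fun _ => (e i))) := by
    filter_upwards [hw.mem_nhds hy] with z hz using hfd z hz
  rw [hev2.fderiv_eq]
  have h1 : HasFDerivAt (fun z' => p z' 1) (p y 2).curryLeft y :=
    (hp.fderivWithin 1 (by norm_num) y hy).hasFDerivAt (hw.mem_nhds hy)
  have h2 : HasFDerivAt (fun z => p z 1 (fun _ => (e i)))
      ((ContinuousMultilinearMap.apply ℝ
        (fun _ : Fin 1 => EuclideanSpace ℝ (Fin n)) ℝ (fun _ => (e i))).comp
        (p y 2).curryLeft) y := by
    have h2' := (ContinuousMultilinearMap.apply ℝ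
        (fun _ : Fin 1 => EuclideanSpace ℝ (Fin n)) ℝ (fun _ => (e i))).hasFDerivAt.comp y h1
    exact h2'
  rw [h2.fderiv]
  show (ContinuousMultilinearMap.apply ℝ _ ℝ (fun _ => (e i))) ((p y 2).curryLeft (e i)) = _
  rw [ContinuousMultilinearMap.apply_apply, ContinuousMultilinearMap.curryLeft_apply, aux_vec1_eq]

private theorem aux_bddAbove_lapV {n : ℕ} {Ω : Set (EuclideanSpace ℝ (Fin n))}
    (hΩopen : IsOpen Ω) (hΩbdd : Bornology.IsBounded Ω)
    {V : EuclideanSpace ℝ (Fin n) → ℝ} (hV : ContDiffOn ℝ (⊤ : ℕ∞) V (closure Ω)) :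
    ∃ M : ℝ, ∀ y ∈ Ω,
      (∑ i, fderiv ℝ (fun z => fderiv ℝ V z (e i)) y (e i)) ≤ M := by
  classical
  have hK : IsCompact (closure Ω) := hΩbdd.isCompact_closure
  have hloc : ∀ x ∈ closure Ω, ∃ t : Set (EuclideanSpace ℝ (Fin n)), t ∈ nhds x ∧
      ∃ M : ℝ, ∀ y ∈ t ∩ Ω, (∑ i, fderiv ℝ (fun z => fderiv ℝ V z (e i)) y (e i)) ≤ M := by
    intro x hx
    have h2 : ContDiffWithinAt ℝ 2 V (closure Ω) x := (hV x hx).of_le (by exact WithTop.coe_le_coe.2 (le_top : (2:ℕ∞) ≤ ⊤))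
    obtain ⟨u, hu, p, hp⟩ := contDiffWithinAt_nat.1 h2
    rw [insert_eq_of_mem hx] at hu
    obtain ⟨t, htopen, hxt, htu⟩ := mem_nhdsWithin.1 hu
    obtain ⟨ε, hε, hball⟩ := Metric.isOpen_iff.1 htopen x hxt
    have hKu : Metric.closedBall x (ε/2) ∩ closure Ω ⊆ u := fun z hz =>
      (inter_subset_inter_left _
        ((Metric.closedBall_subset_ball (by linarith)).trans hball)).trans htu hz
    have hKcomp : IsCompact (Metric.closedBall x (ε/2) ∩ closure Ω) :=
      (isCompact_closedBall x (ε/2)).inter_right isClosed_closure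
    have cont : ContinuousOn (fun z => p z 2) u := hp.cont 2 (by norm_num)
    obtain ⟨C, hC⟩ := hKcomp.exists_bound_of_continuousOn (cont.mono hKu)
    have hwopen : IsOpen (Metric.ball x (ε/2) ∩ Ω) := Metric.isOpen_ball.inter hΩopen
    have hwu : Metric.ball x (ε/2) ∩ Ω ⊆ u := fun z hz =>
      hKu ⟨Metric.ball_subset_closedBall hz.1, subset_closure hz.2⟩
    have hpw := hp.mono hwu
    refine ⟨Metric.ball x (ε/2), Metric.ball_mem_nhds x (by linarith), (n : ℝ) * C, ?_⟩
    intro y hy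
    have hyw : y ∈ Metric.ball x (ε/2) ∩ Ω := hy
    calc (∑ i, fderiv ℝ (fun z => fderiv ℝ V z (e i)) y (e i))
        = ∑ i, p y 2 (fun _ => (e i)) :=
          Finset.sum_congr rfl fun i _ => aux_lap_eq_taylor hwopen hpw hyw i
      _ ≤ ∑ _i : Fin n, C := by
          refine Finset.sum_le_sum fun i _ => ?_
          have h1 := (p y 2).le_opNorm (fun _ => (e i))
          have h3 : ∏ j : Fin 2, ‖(fun _ => (e i)) j‖ = 1 := by
            simp [EuclideanSpace.norm_single]
          rw [h3, mul_one] at h1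
          have h4 : ‖p y 2‖ ≤ C :=
            hC y ⟨Metric.ball_subset_closedBall hyw.1, subset_closure hyw.2⟩
          calc p y 2 (fun _ => (e i)) ≤ |p y 2 (fun _ => (e i))| := le_abs_self _
            _ = ‖p y 2 (fun _ => (e i))‖ := rfl
            _ ≤ ‖p y 2‖ := h1
            _ ≤ C := h4
      _ = (n : ℝ) * C := by simp [Finset.sum_const, Finset.card_univ, nsmul_eq_mul]
  by_cases hΩne : Ω = ∅
  · exact ⟨0, by simp [hΩne]⟩
  choose! T hT M hM using hloc
  obtain ⟨F, hFsub, hFcover⟩ := hK.elim_nhds_subcover T (fun x hx => hT x hx)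
  have hFne : F.Nonempty := by
    rcases nonempty_iff_ne_empty.2 hΩne with ⟨z, hz⟩
    rcases mem_iUnion₂.1 (hFcover (subset_closure hz)) with ⟨x, hxF, _⟩
    exact ⟨x, hxF⟩
  refine ⟨F.sup' hFne M, fun y hy => ?_⟩
  rcases mem_iUnion₂.1 (hFcover (subset_closure hy)) with ⟨x, hxF, hyT⟩
  exact le_trans (hM x (hFsub x hxF) y ⟨hyT, hy⟩) (Finset.le_sup' M hxF)

private theorem aux_fderiv_comb {E : Type*} [NormedAddCommGroup E] [NormedSpace ℝ E]
    {ι : Type*} [Fintype ι] (a : ι → ℝ) (F G : ι → E → ℝ) (W : E → ℝ) (c : ℝ) (x v : E)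
    (hF : ∀ j, DifferentiableAt ℝ (F j) x) (hG : ∀ j, DifferentiableAt ℝ (G j) x)
    (hW : DifferentiableAt ℝ W x) :
    fderiv ℝ (fun y => (∑ j, a j * (F j y * G j y)) - W y + c) x v
      = (∑ j, a j * (F j x * fderiv ℝ (G j) x v + G j x * fderiv ℝ (F j) x v))
        - fderiv ℝ W x v := by
  have hj : ∀ j : ι, HasFDerivAt (fun y => a j * (F j y * G j y))
      (a j • (F j x • fderiv ℝ (G j) x + G j x • fderiv ℝ (F j) x)) x := fun j =>
    (((hF j).hasFDerivAt.mul (hG j).hasFDerivAt)).const_mul (a j)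
  have hsum := HasFDerivAt.fun_sum (fun j (_ : j ∈ Finset.univ) => hj j)
  have htot := (hsum.fun_sub hW.hasFDerivAt).add_const c
  rw [htot.fderiv]
  simp [ContinuousLinearMap.sum_apply, mul_add]

private theorem aux_norm_sq_gradient {n : ℕ} (φ : EuclideanSpace ℝ (Fin n) → ℝ)
    (x : EuclideanSpace ℝ (Fin n)) :
    ‖gradient φ x‖ ^ 2 = ∑ j, (fderiv ℝ φ x (EuclideanSpace.single j 1)) ^ 2 := by
  have h1 : ∀ j, fderiv ℝ φ x (EuclideanSpace.single j 1) = gradient φ x j := by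
    intro j
    have h : (inner ℝ (gradient φ x) (EuclideanSpace.single j (1:ℝ)) : ℝ)
        = fderiv ℝ φ x (EuclideanSpace.single j 1) :=
      InnerProductSpace.toDual_symm_apply
    rw [← h, EuclideanSpace.inner_single_right]
    simp
  simp_rw [h1]
  rw [EuclideanSpace.norm_eq, sq_sqrt (by positivity)]
  simp [sq_abs]

end AuxLemmas

/-- if `Δφ = |∇φ|² − V + λ₁` on the bounded open set `Ω` and `Δφ` attains its
maximum over the closure of `Ω` at an interior point `x₀ ∈ Ω`, then
`(Δφ(x₀))² ≤ (n/2)·sup_Ω ΔV`. -/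
theorem interior_maximum_bound_for_laplacian
    {n : ℕ} (Ω : Set (EuclideanSpace ℝ (Fin n)))
    (hΩopen : IsOpen Ω) (hΩbdd : Bornology.IsBounded Ω)
    (V φ : EuclideanSpace ℝ (Fin n) → ℝ) (l₁ : ℝ)
    (hV : ContDiffOn ℝ (⊤ : ℕ∞) V (closure Ω))
    (hφ : ContDiffOn ℝ (⊤ : ℕ∞) φ (closure Ω))
    (heq : ∀ x ∈ Ω, lapWithin (closure Ω) φ x = ‖gradient φ x‖ ^ 2 - V x + l₁)
    (x₀ : EuclideanSpace ℝ (Fin n)) (hx₀ : x₀ ∈ Ω)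
    (hmax : ∀ y ∈ closure Ω, lapWithin (closure Ω) φ y ≤ lapWithin (closure Ω) φ x₀) :
    (lapWithin (closure Ω) φ x₀) ^ 2
      ≤ (n : ℝ) / 2 * sSup ((fun y => lapWithin (closure Ω) V y) '' Ω) := by
  classical
  have hcl : ∀ x ∈ Ω, closure Ω ∈ nhds x := fun x hx =>
    Filter.mem_of_superset (hΩopen.mem_nhds hx) subset_closure
  have hφs : ∀ x ∈ Ω, ContDiffAt ℝ (⊤ : ℕ∞) φ x := fun x hx =>
    (hφ x (subset_closure hx)).contDiffAt (hcl x hx)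
  have hVs : ∀ x ∈ Ω, ContDiffAt ℝ (⊤ : ℕ∞) V x := fun x hx =>
    (hV x (subset_closure hx)).contDiffAt (hcl x hx)
  set P : Fin n → EuclideanSpace ℝ (Fin n) → ℝ :=
    fun j y => fderiv ℝ φ y (EuclideanSpace.single j 1) with hPdef
  have hPs : ∀ j, ∀ x ∈ Ω, ContDiffAt ℝ (⊤ : ℕ∞) (P j) x := fun j x hx =>
    aux_contDiffAt_dderiv _ (hφs x hx)
  set U : EuclideanSpace ℝ (Fin n) → ℝ := lap φ with hUdef
  have hUfun : U = fun x => ∑ i, fderiv ℝ (P i) x (EuclideanSpace.single i 1) := rfl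
  have hUsmooth : ∀ x ∈ Ω, ContDiffAt ℝ (⊤ : ℕ∞) U x := by
    intro x hx
    rw [hUfun]
    exact ContDiffAt.sum fun i _ => aux_contDiffAt_dderiv _ (hPs i x hx)
  have hUlap : ∀ x ∈ Ω, lapWithin (closure Ω) φ x = U x := fun x hx =>
    aux_lapWithin_eq_lap (hcl x hx)
  have hUeq : ∀ x ∈ Ω, U x = (∑ j, 1 * (P j x * P j x)) - V x + l₁ := by
    intro x hx
    calc U x = ‖gradient φ x‖ ^ 2 - V x + l₁ := by rw [← hUlap x hx]; exact heq x hx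
      _ = (∑ j, 1 * (P j x * P j x)) - V x + l₁ := by
          rw [aux_norm_sq_gradient]
          simp [hPdef, pow_two]
  have hUmax : IsLocalMax U x₀ := by
    filter_upwards [hΩopen.mem_nhds hx₀] with y hy
    calc U y = lapWithin (closure Ω) φ y := (hUlap y hy).symm
      _ ≤ lapWithin (closure Ω) φ x₀ := hmax y (subset_closure hy)
      _ = U x₀ := hUlap x₀ hx₀
  have hDU0 : ∀ v, fderiv ℝ U x₀ v = 0 := fun v => by
    rw [hUmax.fderiv_eq_zero]; rfl
  -- first derivative formula on Ω
  have hDU : ∀ x ∈ Ω, ∀ v, fderiv ℝ U x v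
      = (∑ j, 2 * (P j x * fderiv ℝ (P j) x v)) - fderiv ℝ V x v := by
    intro x hx v
    have hev : U =ᶠ[nhds x] fun y => (∑ j, 1 * (P j y * P j y)) - V y + l₁ := by
      filter_upwards [hΩopen.mem_nhds hx] with y hy using hUeq y hy
    rw [hev.fderiv_eq]
    rw [aux_fderiv_comb (fun _ => (1:ℝ)) P P V l₁ x v
      (fun j => ((hPs j x hx).differentiableAt (by simp)))
      (fun j => ((hPs j x hx).differentiableAt (by simp)))
      ((hVs x hx).differentiableAt (by simp))]
    congr 1
    exact Finset.sum_congr rfl fun j _ => by ring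
  -- second derivative formula at x₀
  have hD2U : ∀ i : Fin n, fderiv ℝ (fun y => fderiv ℝ U y (EuclideanSpace.single i 1)) x₀
        (EuclideanSpace.single i 1)
      = (∑ j, 2 * (P j x₀ *
            fderiv ℝ (fun y => fderiv ℝ (P j) y (EuclideanSpace.single i 1)) x₀
              (EuclideanSpace.single i 1)
          + fderiv ℝ (P j) x₀ (EuclideanSpace.single i 1)
            * fderiv ℝ (P j) x₀ (EuclideanSpace.single i 1)))
        - fderiv ℝ (fun y => fderiv ℝ V y (EuclideanSpace.single i 1)) x₀
            (EuclideanSpace.single i 1) := by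
    intro i
    have hev : (fun y => fderiv ℝ U y (EuclideanSpace.single i 1)) =ᶠ[nhds x₀]
        fun y => (∑ j, 2 * (P j y * fderiv ℝ (P j) y (EuclideanSpace.single i 1)))
          - fderiv ℝ V y (EuclideanSpace.single i 1) + 0 := by
      filter_upwards [hΩopen.mem_nhds hx₀] with y hy
      rw [hDU y hy (EuclideanSpace.single i 1), add_zero]
    rw [hev.fderiv_eq]
    have hcomb := aux_fderiv_comb (fun _ => (2:ℝ)) P
      (fun j y => fderiv ℝ (P j) y (EuclideanSpace.single i 1))
      (fun y => fderiv ℝ V y (EuclideanSpace.single i 1)) 0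
      x₀ (EuclideanSpace.single i 1)
      (fun j => ((hPs j x₀ hx₀).differentiableAt (by simp)))
      (fun j => ((aux_contDiffAt_dderiv _ (hPs j x₀ hx₀)).differentiableAt (by simp)))
      ((aux_contDiffAt_dderiv _ (hVs x₀ hx₀)).differentiableAt (by simp))
    rw [hcomb]
  -- swap identity
  have hswap : ∀ j : Fin n,
      (∑ i, fderiv ℝ (fun y => fderiv ℝ (P j) y (EuclideanSpace.single i 1)) x₀
        (EuclideanSpace.single i 1)) = 0 := by
    intro j
    have step : ∀ i : Fin n,
        fderiv ℝ (fun y => fderiv ℝ (P j) y (EuclideanSpace.single i 1)) x₀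
          (EuclideanSpace.single i 1)
        = fderiv ℝ (fun y => fderiv ℝ (P i) y (EuclideanSpace.single i 1)) x₀
            (EuclideanSpace.single j 1) := by
      intro i
      have hcong : (fun y => fderiv ℝ (P j) y (EuclideanSpace.single i 1)) =ᶠ[nhds x₀]
          (fun y => fderiv ℝ (P i) y (EuclideanSpace.single j 1)) := by
        filter_upwards [hΩopen.mem_nhds hx₀] with y hy
        exact aux_fderiv_symm (EuclideanSpace.single j 1) (EuclideanSpace.single i 1) (hφs y hy)
      rw [hcong.fderiv_eq]
      exact aux_fderiv_symm (EuclideanSpace.single j 1) (EuclideanSpace.single i 1)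
        (hPs i x₀ hx₀)
    have hdiff : ∀ i ∈ Finset.univ, DifferentiableAt ℝ
        (fun y => fderiv ℝ (P i) y (EuclideanSpace.single i 1)) x₀ := fun i _ =>
      (aux_contDiffAt_dderiv _ (hPs i x₀ hx₀)).differentiableAt (by simp)
    calc (∑ i, fderiv ℝ (fun y => fderiv ℝ (P j) y (EuclideanSpace.single i 1)) x₀
          (EuclideanSpace.single i 1))
        = ∑ i, fderiv ℝ (fun y => fderiv ℝ (P i) y (EuclideanSpace.single i 1)) x₀
            (EuclideanSpace.single j 1) := Finset.sum_congr rfl fun i _ => step i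
      _ = fderiv ℝ (fun y => ∑ i, fderiv ℝ (P i) y (EuclideanSpace.single i 1)) x₀
            (EuclideanSpace.single j 1) := by
          rw [fderiv_fun_sum hdiff]
          simp [ContinuousLinearMap.sum_apply]
      _ = fderiv ℝ U x₀ (EuclideanSpace.single j 1) := rfl
      _ = 0 := hDU0 _
  -- second derivative test
  have hsum2 : ∑ i, fderiv ℝ (fun y => fderiv ℝ U y (EuclideanSpace.single i 1)) x₀
      (EuclideanSpace.single i 1) ≤ 0 := by
    refine Finset.sum_nonpos fun i _ => ?_
    refine aux_fderiv2_dir_nonpos ?_ hUmax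
    filter_upwards [hΩopen.mem_nhds hx₀] with y hy using hUsmooth y hy
  -- key inequality : 2 T ≤ lap V x₀
  have key : 2 * (∑ i, ∑ j, fderiv ℝ (P j) x₀ (EuclideanSpace.single i 1)
        * fderiv ℝ (P j) x₀ (EuclideanSpace.single i 1))
      ≤ ∑ i, fderiv ℝ (fun y => fderiv ℝ V y (EuclideanSpace.single i 1)) x₀
          (EuclideanSpace.single i 1) := by
    have h0 : ∑ i, ((∑ j, 2 * (P j x₀ *
            fderiv ℝ (fun y => fderiv ℝ (P j) y (EuclideanSpace.single i 1)) x₀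
              (EuclideanSpace.single i 1)
          + fderiv ℝ (P j) x₀ (EuclideanSpace.single i 1)
            * fderiv ℝ (P j) x₀ (EuclideanSpace.single i 1)))
        - fderiv ℝ (fun y => fderiv ℝ V y (EuclideanSpace.single i 1)) x₀
            (EuclideanSpace.single i 1)) ≤ 0 :=
      le_trans (le_of_eq (Finset.sum_congr rfl fun i _ => (hD2U i).symm)) hsum2
    have h1 : ∑ i, ((∑ j, 2 * (P j x₀ *
            fderiv ℝ (fun y => fderiv ℝ (P j) y (EuclideanSpace.single i 1)) x₀
              (EuclideanSpace.single i 1)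
          + fderiv ℝ (P j) x₀ (EuclideanSpace.single i 1)
            * fderiv ℝ (P j) x₀ (EuclideanSpace.single i 1)))
        - fderiv ℝ (fun y => fderiv ℝ V y (EuclideanSpace.single i 1)) x₀
            (EuclideanSpace.single i 1))
        = (∑ j, 2 * P j x₀ * (∑ i,
              fderiv ℝ (fun y => fderiv ℝ (P j) y (EuclideanSpace.single i 1)) x₀
                (EuclideanSpace.single i 1)))
          + 2 * (∑ i, ∑ j, fderiv ℝ (P j) x₀ (EuclideanSpace.single i 1)
              * fderiv ℝ (P j) x₀ (EuclideanSpace.single i 1))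
          - ∑ i, fderiv ℝ (fun y => fderiv ℝ V y (EuclideanSpace.single i 1)) x₀
              (EuclideanSpace.single i 1) := by
      rw [Finset.sum_sub_distrib]
      congr 1
      have hsplit : ∀ i : Fin n, (∑ j, 2 * (P j x₀ *
            fderiv ℝ (fun y => fderiv ℝ (P j) y (EuclideanSpace.single i 1)) x₀
              (EuclideanSpace.single i 1)
          + fderiv ℝ (P j) x₀ (EuclideanSpace.single i 1)
            * fderiv ℝ (P j) x₀ (EuclideanSpace.single i 1)))
          = (∑ j, 2 * P j x₀ *
              fderiv ℝ (fun y => fderiv ℝ (P j) y (EuclideanSpace.single i 1)) x₀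
                (EuclideanSpace.single i 1))
            + ∑ j, 2 * (fderiv ℝ (P j) x₀ (EuclideanSpace.single i 1)
              * fderiv ℝ (P j) x₀ (EuclideanSpace.single i 1)) := by
        intro i
        rw [← Finset.sum_add_distrib]
        exact Finset.sum_congr rfl fun j _ => by ring
      simp_rw [hsplit]
      rw [Finset.sum_add_distrib]
      congr 1
      · rw [Finset.sum_comm]
        exact Finset.sum_congr rfl fun j _ => by rw [Finset.mul_sum]
      · rw [Finset.mul_sum]
        exact Finset.sum_congr rfl fun i _ => by rw [Finset.mul_sum]
    rw [h1] at h0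
    simp_rw [hswap, mul_zero, Finset.sum_const_zero, zero_add] at h0
    linarith
  -- Cauchy-Schwarz
  have hcs : (∑ i, fderiv ℝ (P i) x₀ (EuclideanSpace.single i 1)) ^ 2
      ≤ (n : ℝ) * ∑ i, fderiv ℝ (P i) x₀ (EuclideanSpace.single i 1)
          * fderiv ℝ (P i) x₀ (EuclideanSpace.single i 1) := by
    have h := sq_sum_le_card_mul_sum_sq (s := (Finset.univ : Finset (Fin n)))
      (f := fun i => fderiv ℝ (P i) x₀ (EuclideanSpace.single i 1))
    simpa [Finset.card_univ, pow_two] using h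
  have hdiag : ∑ i, fderiv ℝ (P i) x₀ (EuclideanSpace.single i 1)
        * fderiv ℝ (P i) x₀ (EuclideanSpace.single i 1)
      ≤ ∑ i, ∑ j, fderiv ℝ (P j) x₀ (EuclideanSpace.single i 1)
        * fderiv ℝ (P j) x₀ (EuclideanSpace.single i 1) := by
    refine Finset.sum_le_sum fun i _ => ?_
    exact Finset.single_le_sum (f := fun j => fderiv ℝ (P j) x₀ (EuclideanSpace.single i 1)
      * fderiv ℝ (P j) x₀ (EuclideanSpace.single i 1))
      (fun j _ => mul_self_nonneg _) (Finset.mem_univ i)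
  -- sSup bound
  have hbdd : BddAbove ((fun y => lapWithin (closure Ω) V y) '' Ω) := by
    obtain ⟨M, hM⟩ := aux_bddAbove_lapV hΩopen hΩbdd hV
    refine ⟨M, fun z hz => ?_⟩
    obtain ⟨y, hy, rfl⟩ := hz
    show lapWithin (closure Ω) V y ≤ M
    rw [aux_lapWithin_eq_lap (hcl y hy)]
    exact hM y hy
  have himg : lapWithin (closure Ω) V x₀ ∈ (fun y => lapWithin (closure Ω) V y) '' Ω :=
    ⟨x₀, hx₀, rfl⟩
  have hsup : lapWithin (closure Ω) V x₀ ≤ sSup ((fun y => lapWithin (closure Ω) V y) '' Ω) :=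
    le_csSup hbdd himg
  have hlapVx : lapWithin (closure Ω) V x₀
      = ∑ i, fderiv ℝ (fun y => fderiv ℝ V y (EuclideanSpace.single i 1)) x₀
          (EuclideanSpace.single i 1) :=
    aux_lapWithin_eq_lap (hcl x₀ hx₀)
  -- final assembly
  have hUx0 : lapWithin (closure Ω) φ x₀
      = ∑ i, fderiv ℝ (P i) x₀ (EuclideanSpace.single i 1) := hUlap x₀ hx₀
  rw [hUx0]
  have hn0 : (0:ℝ) ≤ (n : ℝ) := Nat.cast_nonneg n
  calc (∑ i, fderiv ℝ (P i) x₀ (EuclideanSpace.single i 1)) ^ 2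
      ≤ (n : ℝ) * ∑ i, fderiv ℝ (P i) x₀ (EuclideanSpace.single i 1)
          * fderiv ℝ (P i) x₀ (EuclideanSpace.single i 1) := hcs
    _ ≤ (n : ℝ) * ∑ i, ∑ j, fderiv ℝ (P j) x₀ (EuclideanSpace.single i 1)
          * fderiv ℝ (P j) x₀ (EuclideanSpace.single i 1) :=
        mul_le_mul_of_nonneg_left hdiag hn0
    _ ≤ (n : ℝ) * ((∑ i, fderiv ℝ (fun y => fderiv ℝ V y (EuclideanSpace.single i 1)) x₀
          (EuclideanSpace.single i 1)) / 2) := by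
        have : (∑ i, ∑ j, fderiv ℝ (P j) x₀ (EuclideanSpace.single i 1)
            * fderiv ℝ (P j) x₀ (EuclideanSpace.single i 1))
            ≤ (∑ i, fderiv ℝ (fun y => fderiv ℝ V y (EuclideanSpace.single i 1)) x₀
              (EuclideanSpace.single i 1)) / 2 := by linarith
        exact mul_le_mul_of_nonneg_left this hn0
    _ = (n : ℝ) / 2 * (∑ i, fderiv ℝ (fun y => fderiv ℝ V y (EuclideanSpace.single i 1)) x₀
          (EuclideanSpace.single i 1)) := by ring
    _ = (n : ℝ) / 2 * lapWithin (closure Ω) V x₀ := by rw [hlapVx]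
    _ ≤ (n : ℝ) / 2 * sSup ((fun y => lapWithin (closure Ω) V y) '' Ω) :=
        mul_le_mul_of_nonneg_left hsup (by positivity)
end

section
/- Let Ω be the open ball of radius R > 0 centered at the origin in ℝⁿ. Let φ be smooth on the closure of Ω with Δφ = |∇φ|² − V + λ₁ in Ω and ∂φ/∂ν = 0 on ∂Ω, and let f be smooth on the closure of Ω with Δf − (1/2)|∇f|² − x·∇V ≥ 0 in Ω. Then for every x in Ω, x·∇φ(x) − 2φ(x) + f(x) ≤ max_{y ∈ ∂Ω} ( f(y) − 2φ(y) ), where x·∇g denotes the radial derivative ∑ᵢ xᵢ ∂g/∂xᵢ. -/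
open scoped RealInnerProductSpace
open Metric Real Set
open Filter Topology

lemma hasFDerivAt_clm_apply_const {E F : Type*} [NormedAddCommGroup E] [NormedSpace ℝ E]
    [NormedAddCommGroup F] [NormedSpace ℝ F]
    {c : E → (E →L[ℝ] F)} {c' : E →L[ℝ] (E →L[ℝ] F)} {x : E} (h : HasFDerivAt c c' x) (v : E) :
    HasFDerivAt (fun y => c y v) (c'.flip v) x := by
  have := h.clm_apply (hasFDerivAt_const v x)
  simpa using this

lemma secondDeriv_nonpos_of_isLocalMax {g g' : ℝ → ℝ} {d δ₀ : ℝ} (hδ₀ : 0 < δ₀)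
    (hg : ∀ t : ℝ, |t| < δ₀ → HasDerivAt g (g' t) t)
    (hd : HasDerivAt g' d 0)
    (hmax : IsLocalMax g 0) : d ≤ 0 := by
  by_contra hd0
  push_neg at hd0
  have h0 : g' 0 = 0 := hmax.hasDerivAt_eq_zero (hg 0 (by simpa using hδ₀))
  have hslope : Filter.Tendsto (slope g' 0) (nhdsWithin 0 {(0:ℝ)}ᶜ) (nhds d) :=
    hasDerivAt_iff_tendsto_slope.mp hd
  have hev : ∀ᶠ t in nhdsWithin 0 {(0:ℝ)}ᶜ, 0 < slope g' 0 t :=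
    hslope.eventually (eventually_gt_nhds hd0)
  rw [eventually_nhdsWithin_iff] at hev
  have hmax' : ∀ᶠ t in nhds (0:ℝ), g t ≤ g 0 := hmax
  have hall : ∀ᶠ t in nhds (0:ℝ), (t ∈ ({0}ᶜ : Set ℝ) → 0 < slope g' 0 t) ∧ g t ≤ g 0 ∧ |t| < δ₀ := by
    filter_upwards [hev, hmax', eventually_abs_sub_lt 0 hδ₀] with t h1 h2 h3
    exact ⟨h1, h2, by simpa using h3⟩
  rcases Metric.eventually_nhds_iff.mp hall with ⟨δ, hδ, hδall⟩
  set t₁ := min (δ/2) (δ₀/2) with ht₁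
  have ht₁pos : 0 < t₁ := lt_min (by linarith) (by linarith)
  have hmem : ∀ t ∈ Icc (0:ℝ) t₁, dist t 0 < δ := by
    intro t ht
    rw [Real.dist_eq, sub_zero, abs_of_nonneg ht.1]
    calc t ≤ t₁ := ht.2
      _ ≤ δ/2 := min_le_left _ _
      _ < δ := by linarith
  have hg'pos : ∀ t ∈ interior (Icc (0:ℝ) t₁), 0 < g' t := by
    intro t ht
    rw [interior_Icc] at ht
    have h := (hδall (hmem t ⟨le_of_lt ht.1, le_of_lt ht.2⟩)).1 (by simp [ne_of_gt ht.1])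
    have hs : slope g' 0 t = g' t / t := by simp [slope_def_field, h0]
    rw [hs] at h
    have := mul_pos h ht.1
    rwa [div_mul_cancel₀ _ (ne_of_gt ht.1)] at this
  have hcont : ContinuousOn g (Icc (0:ℝ) t₁) := by
    intro t ht
    exact ((hg t (hδall (hmem t ht)).2.2).continuousAt).continuousWithinAt
  have hdg : ∀ t ∈ interior (Icc (0:ℝ) t₁), 0 < deriv g t := by
    intro t ht
    rw [(hg t (hδall (hmem t (interior_subset ht))).2.2).deriv]
    exact hg'pos t ht
  have hmono := strictMonoOn_of_deriv_pos (convex_Icc _ _) hcont hdg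
  have hlt : g 0 < g t₁ := hmono ⟨le_refl _, le_of_lt ht₁pos⟩ ⟨le_of_lt ht₁pos, le_refl _⟩ ht₁pos
  have hle : g t₁ ≤ g 0 := (hδall (hmem t₁ ⟨le_of_lt ht₁pos, le_refl _⟩)).2.1
  linarith


lemma grad_coord {n : ℕ} (g : EuclideanSpace ℝ (Fin n) → ℝ) (y : EuclideanSpace ℝ (Fin n))
    (i : Fin n) : fderiv ℝ g y (EuclideanSpace.single i 1) = gradient g y i := by
  have h1 : ⟪gradient g y, EuclideanSpace.single i (1:ℝ)⟫
      = fderiv ℝ g y (EuclideanSpace.single i 1) := InnerProductSpace.toDual_symm_apply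
  rw [← h1, EuclideanSpace.inner_single_right]
  simp

lemma grad_norm_sq {n : ℕ} (g : EuclideanSpace ℝ (Fin n) → ℝ) (y : EuclideanSpace ℝ (Fin n)) :
    ‖gradient g y‖^2 = ∑ i, (fderiv ℝ g y (EuclideanSpace.single i 1))
      * (fderiv ℝ g y (EuclideanSpace.single i 1)) := by
  rw [← real_inner_self_eq_norm_sq, PiLp.inner_apply]
  refine Finset.sum_congr rfl fun i _ => ?_
  rw [grad_coord g y i]
  simp [RCLike.inner_apply, sq]

set_option maxHeartbeats 4000000 in
/-- on the ball `Ω` of radius `R`, if `φ` satisfies `Δφ = |∇φ|² − V + λ₁`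
with the Neumann condition `∂φ/∂ν = 0` on `∂Ω`, and `f` satisfies
`Δf − ½|∇f|² − x·∇V ≥ 0` in `Ω`, then `x·∇φ − 2φ + f ≤ max_{∂Ω} (f − 2φ)` in `Ω`,
where `x·∇g = ⟪x, ∇g⟫` is the radial derivative. -/
theorem radial_growth_estimate_with_auxiliary_function
    {n : ℕ} (hn : 0 < n) (R : ℝ) (hR : 0 < R)
    (V φ f : EuclideanSpace ℝ (Fin n) → ℝ) (l₁ : ℝ)
    (hV : ContDiffOn ℝ (⊤ : ℕ∞) V (closedBall (0 : EuclideanSpace ℝ (Fin n)) R))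
    (hφ : ContDiffOn ℝ (⊤ : ℕ∞) φ (closedBall (0 : EuclideanSpace ℝ (Fin n)) R))
    (hf : ContDiffOn ℝ (⊤ : ℕ∞) f (closedBall (0 : EuclideanSpace ℝ (Fin n)) R))
    (heq : ∀ x ∈ ball (0 : EuclideanSpace ℝ (Fin n)) R,
      lap φ x = ‖gradient φ x‖ ^ 2 - V x + l₁)
    (hNeumann : ∀ x ∈ sphere (0 : EuclideanSpace ℝ (Fin n)) R,
      fderivWithin ℝ φ (closedBall (0 : EuclideanSpace ℝ (Fin n)) R) x ((R⁻¹ : ℝ) • x) = 0)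
    (hfsub : ∀ x ∈ ball (0 : EuclideanSpace ℝ (Fin n)) R,
      0 ≤ lap f x - (1 / 2) * ‖gradient f x‖ ^ 2 - ⟪x, gradient V x⟫) :
    ∀ x ∈ ball (0 : EuclideanSpace ℝ (Fin n)) R,
      ⟪x, gradient φ x⟫ - 2 * φ x + f x
        ≤ sSup ((fun y => f y - 2 * φ y) '' sphere (0 : EuclideanSpace ℝ (Fin n)) R) := by
  intro x₀ hx₀
  set cb := closedBall (0 : EuclideanSpace ℝ (Fin n)) R with hcb
  set Ω := ball (0 : EuclideanSpace ℝ (Fin n)) R with hΩdef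
  set sp := sphere (0 : EuclideanSpace ℝ (Fin n)) R with hsp
  have hcb_nhds : ∀ y ∈ Ω, cb ∈ 𝓝 y := fun y hy =>
    Filter.mem_of_superset (isOpen_ball.mem_nhds hy) ball_subset_closedBall
  have hUD : UniqueDiffOn ℝ cb := uniqueDiffOn_convex (convex_closedBall _ _)
    (by rw [hcb, interior_closedBall _ hR.ne']; exact nonempty_ball.mpr hR)
  set Φw := fderivWithin ℝ φ cb with hΦw
  have hΦw_cont : ContinuousOn Φw cb := (hφ.fderivWithin (m := (⊤ : ℕ∞)) hUD (by simp)).continuousOn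
  have hΦeq : ∀ y ∈ Ω, Φw y = fderiv ℝ φ y := fun y hy =>
    fderivWithin_of_mem_nhds (hcb_nhds y hy)
  obtain ⟨M, hM⟩ := (isCompact_closedBall (0 : EuclideanSpace ℝ (Fin n)) R).exists_bound_of_continuousOn hΦw_cont
  set M' := max M 0 with hM'
  set K := 2 * M' + 1 with hK
  have hM'0 : 0 ≤ M' := le_max_right _ _
  have hKpos : 0 < K := by positivity
  set j0 : Fin n := ⟨0, hn⟩ with hj0
  set h : EuclideanSpace ℝ (Fin n) → ℝ := fun y => Real.exp (K * y j0) with hh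
  have hhpos : ∀ y, 0 < h y := fun y => Real.exp_pos _
  set Dh : EuclideanSpace ℝ (Fin n) → (EuclideanSpace ℝ (Fin n) →L[ℝ] ℝ) := fun y =>
    Real.exp (K * y j0) • (K • (EuclideanSpace.proj j0 : EuclideanSpace ℝ (Fin n) →L[ℝ] ℝ)) with hDh
  have hDh' : ∀ y, HasFDerivAt h (Dh y) y := by
    intro y
    have h1 : HasFDerivAt (fun y : EuclideanSpace ℝ (Fin n) => K * y j0)
        (K • (EuclideanSpace.proj j0 : EuclideanSpace ℝ (Fin n) →L[ℝ] ℝ)) y :=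
      ((EuclideanSpace.proj j0 : EuclideanSpace ℝ (Fin n) →L[ℝ] ℝ).hasFDerivAt (x := y)).const_mul K
    exact (Real.hasDerivAt_exp (K * y j0)).comp_hasFDerivAt y h1
  have hhcont : Continuous h := by
    have : Continuous fun y : EuclideanSpace ℝ (Fin n) => K * y j0 :=
      continuous_const.mul (EuclideanSpace.proj j0 : EuclideanSpace ℝ (Fin n) →L[ℝ] ℝ).continuous
    exact Real.continuous_exp.comp this
  have hcoord : ∀ y : EuclideanSpace ℝ (Fin n), |y j0| ≤ ‖y‖ := by
    intro y
    have h1 : y j0 = ⟪y, EuclideanSpace.single j0 (1:ℝ)⟫ := by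
      rw [EuclideanSpace.inner_single_right]; simp
    rw [h1]
    calc |⟪y, EuclideanSpace.single j0 (1:ℝ)⟫| ≤ ‖y‖ * ‖EuclideanSpace.single j0 (1:ℝ)‖ :=
          abs_real_inner_le_norm _ _
      _ = ‖y‖ := by rw [EuclideanSpace.norm_single]; simp
  set w' : EuclideanSpace ℝ (Fin n) → ℝ := fun y => Φw y y - 2 * φ y + f y with hw'
  have hw'cont : ContinuousOn w' cb :=
    ((hΦw_cont.clm_apply continuousOn_id).sub
      (continuousOn_const.mul hφ.continuousOn)).add hf.continuousOn
  have hw'bd : ∀ z ∈ sp, w' z = f z - 2 * φ z := by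
    intro z hz
    have hz' : (R : ℝ) • ((R⁻¹ : ℝ) • z) = z := by
      rw [smul_smul, mul_inv_cancel₀ hR.ne', one_smul]
    have h0 : Φw z z = 0 := by
      calc Φw z z = Φw z ((R : ℝ) • ((R⁻¹ : ℝ) • z)) := by rw [hz']
        _ = R • Φw z ((R⁻¹ : ℝ) • z) := ContinuousLinearMap.map_smul _ _ _
        _ = 0 := by rw [hNeumann z hz, smul_zero]
    rw [hw']; dsimp only; rw [h0]; ring
  set Msup := sSup ((fun y => f y - 2 * φ y) '' sp) with hMsup
  have hspsub : sp ⊆ cb := sphere_subset_closedBall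
  have hbdd : BddAbove ((fun y => f y - 2 * φ y) '' sp) := by
    have hc : ContinuousOn (fun y => f y - 2 * φ y) sp :=
      (hf.continuousOn.mono hspsub).sub ((continuousOn_const.mul hφ.continuousOn).mono hspsub)
    exact ((isCompact_sphere _ _).image_of_continuousOn hc).bddAbove
  have hMle : ∀ z ∈ sp, f z - 2 * φ z ≤ Msup := fun z hz =>
    le_csSup hbdd (mem_image_of_mem _ hz)
  have key : ∀ ε : ℝ, 0 < ε → w' x₀ ≤ Msup + ε * Real.exp (K * R) := by
    intro ε hε
    set F : EuclideanSpace ℝ (Fin n) → ℝ := fun y => w' y + ε * h y with hF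
    have hFcont : ContinuousOn F cb := hw'cont.add (continuousOn_const.mul hhcont.continuousOn)
    obtain ⟨z, hzcb, hzmax⟩ := (isCompact_closedBall (0 : EuclideanSpace ℝ (Fin n)) R).exists_isMaxOn
      ⟨0, mem_closedBall_self hR.le⟩ hFcont
    have hzcases : z ∈ sp ∨ z ∈ Ω := by
      rcases eq_or_lt_of_le (mem_closedBall.mp hzcb) with h | h
      · left; exact mem_sphere.mpr h
      · right; exact mem_ball.mpr h
    have hzsp : z ∈ sp := by
      rcases hzcases with hc | hc
      · exact hc
      · exfalso
        have hzΩ : z ∈ Ω := hc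
        obtain ⟨ρ, hρpos, hρball⟩ := Metric.isOpen_iff.mp isOpen_ball z hzΩ
        have hφAt : ∀ y ∈ Ω, ContDiffAt ℝ (⊤ : ℕ∞) φ y := fun y hy => hφ.contDiffAt (hcb_nhds y hy)
        have hfAt : ∀ y ∈ Ω, ContDiffAt ℝ (⊤ : ℕ∞) f y := fun y hy => hf.contDiffAt (hcb_nhds y hy)
        have hVAt : ∀ y ∈ Ω, ContDiffAt ℝ (⊤ : ℕ∞) V y := fun y hy => hV.contDiffAt (hcb_nhds y hy)
        set Φ := fderiv ℝ φ with hΦdef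
        set Ff := fderiv ℝ f with hFfdef
        set DΦ := fderiv ℝ Φ with hDΦdef
        have hΦAt : ∀ y ∈ Ω, ContDiffAt ℝ (⊤ : ℕ∞) Φ y := fun y hy => (hφAt y hy).fderiv_right (by simp)
        have hDΦAt : ∀ y ∈ Ω, ContDiffAt ℝ (⊤ : ℕ∞) DΦ y := fun y hy => (hΦAt y hy).fderiv_right (by simp)
        have hΦdiff : ∀ y ∈ Ω, HasFDerivAt Φ (DΦ y) y := fun y hy =>
          ((hΦAt y hy).differentiableAt (by simp)).hasFDerivAt
        have hDΦdiff : ∀ y ∈ Ω, HasFDerivAt DΦ (fderiv ℝ DΦ y) y := fun y hy =>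
          ((hDΦAt y hy).differentiableAt (by simp)).hasFDerivAt
        have hφdiff : ∀ y ∈ Ω, HasFDerivAt φ (Φ y) y := fun y hy =>
          ((hφAt y hy).differentiableAt (by simp)).hasFDerivAt
        have hfdiff : ∀ y ∈ Ω, HasFDerivAt f (Ff y) y := fun y hy =>
          ((hfAt y hy).differentiableAt (by simp)).hasFDerivAt
        have hFfdiff : HasFDerivAt Ff (fderiv ℝ Ff z) z :=
          (((hfAt z hzΩ).fderiv_right (m := (⊤ : ℕ∞)) (by simp)).differentiableAt (by simp)).hasFDerivAt
        set B := DΦ z with hBdef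
        set Bf := fderiv ℝ Ff z with hBfdef
        set C := fderiv ℝ DΦ z with hCdef
        set e : Fin n → EuclideanSpace ℝ (Fin n) := fun i => EuclideanSpace.single i 1 with he
        have he' : ∀ i : Fin n, EuclideanSpace.single i (1:ℝ) = e i := fun i => rfl
        have henorm : ∀ i : Fin n, ‖e i‖ = 1 := by
          intro i; rw [← he' i, EuclideanSpace.norm_single]; simp
        -- the open version Fo of F and its derivative Ψ
        set Fo : EuclideanSpace ℝ (Fin n) → ℝ := fun y => Φ y y - 2 * φ y + f y + ε * h y with hFodef
        set Ψ : EuclideanSpace ℝ (Fin n) → (EuclideanSpace ℝ (Fin n) →L[ℝ] ℝ) := fun y =>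
          (Φ y).comp (ContinuousLinearMap.id ℝ _) + (DΦ y).flip y - (2:ℝ) • Φ y + Ff y + ε • Dh y
          with hΨdef
        have hΨ : ∀ y ∈ Ω, HasFDerivAt Fo (Ψ y) y := by
          intro y hy
          have h1 := ((((hΦdiff y hy).clm_apply (hasFDerivAt_id y)).sub
            ((hφdiff y hy).const_mul (2:ℝ))).add (hfdiff y hy)).add ((hDh' y).const_mul ε)
          simpa only [id_eq, Pi.add_def, Pi.sub_def] using h1
        have hFFo : F =ᶠ[𝓝 z] Fo := by
          filter_upwards [isOpen_ball.mem_nhds hzΩ] with y hy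
          show Φw y y - 2 * φ y + f y + ε * h y = Φ y y - 2 * φ y + f y + ε * h y
          rw [hΦeq y hy]
        have hlocmax : IsLocalMax Fo z := by
          have h1 : IsLocalMax F z := hzmax.isLocalMax (hcb_nhds z hzΩ)
          have h2 : Fo z = F z := (hFFo.eq_of_nhds).symm
          show ∀ᶠ y in 𝓝 z, Fo y ≤ Fo z
          filter_upwards [h1, hFFo] with y h3 h4
          rw [← h4, h2]; exact h3
        -- first order condition
        have hΨz : Ψ z = 0 := by
          rw [← (hΨ z hzΩ).fderiv]
          exact hlocmax.fderiv_eq_zero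
        have hBsym : ∀ v w, B v w = B w v := fun v w =>
          ((hφAt z hzΩ).isSymmSndFDerivAt (by simp only [minSmoothness_of_isRCLikeNormedField]; exact WithTop.coe_le_coe.mpr le_top)).eq v w
        have hfirst : ∀ v, B v z = Φ z v - Ff z v - ε * Dh z v := by
          intro v
          have h1 := DFunLike.congr_fun hΨz v
          simp only [hΨdef, ContinuousLinearMap.add_apply, ContinuousLinearMap.sub_apply,
            ContinuousLinearMap.smul_apply, ContinuousLinearMap.coe_comp',
            ContinuousLinearMap.flip_apply, ContinuousLinearMap.coe_id', Function.comp_apply,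
            id_eq, ContinuousLinearMap.zero_apply, smul_eq_mul] at h1
          rw [hBdef]
          linarith
        -- second derivative of each component of Ψ
        have hψ : ∀ i : Fin n, ∃ D : EuclideanSpace ℝ (Fin n) →L[ℝ] ℝ,
            HasFDerivAt (fun y => Ψ y (e i)) D z ∧
            D (e i) = C (e i) (e i) z + Bf (e i) (e i)
              + ε * (Real.exp (K * z j0) * (K * e i j0) * (K * e i j0)) := by
          intro i
          have hfun : (fun y => Ψ y (e i)) = fun y =>
              Φ y (e i) + DΦ y (e i) y - 2 * Φ y (e i) + Ff y (e i)
                + ε * (h y * (K * e i j0)) := by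
            funext y
            simp only [hΨdef, hDh, hh, ContinuousLinearMap.add_apply,
              ContinuousLinearMap.sub_apply, ContinuousLinearMap.smul_apply,
              ContinuousLinearMap.coe_comp', ContinuousLinearMap.flip_apply,
              ContinuousLinearMap.coe_id', Function.comp_apply, id_eq, smul_eq_mul,
              PiLp.proj_apply]
            try ring
          have p1 : HasFDerivAt (fun y => Φ y (e i)) (B.flip (e i)) z :=
            hasFDerivAt_clm_apply_const (hΦdiff z hzΩ) (e i)
          have c2 : HasFDerivAt (fun y => DΦ y (e i)) (C.flip (e i)) z :=
            hasFDerivAt_clm_apply_const (hDΦdiff z hzΩ) (e i)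
          have p2 : HasFDerivAt (fun y => DΦ y (e i) y)
              ((DΦ z (e i)).comp (ContinuousLinearMap.id ℝ _) + (C.flip (e i)).flip z) z := by
            have := c2.clm_apply (hasFDerivAt_id z)
            simpa only [id_eq] using this
          have p3 : HasFDerivAt (fun y => Ff y (e i)) (Bf.flip (e i)) z :=
            hasFDerivAt_clm_apply_const hFfdiff (e i)
          have p4 : HasFDerivAt (fun y => h y * (K * e i j0)) ((K * e i j0) • Dh z) z :=
            (hDh' z).mul_const _
          have hD := (((p1.add p2).sub (p1.const_mul (2:ℝ))).add p3).add (p4.const_mul ε)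
          refine ⟨_, by rw [hfun]; exact hD, ?_⟩
          simp only [ContinuousLinearMap.add_apply, ContinuousLinearMap.sub_apply,
            ContinuousLinearMap.smul_apply, ContinuousLinearMap.coe_comp',
            ContinuousLinearMap.flip_apply, ContinuousLinearMap.coe_id', Function.comp_apply,
            id_eq, smul_eq_mul, hDh, hBdef, PiLp.proj_apply]
          ring
        -- 1D second derivative test in direction e i
        have hkey : ∀ i : Fin n, C (e i) (e i) z + Bf (e i) (e i)
            + ε * (Real.exp (K * z j0) * (K * e i j0) * (K * e i j0)) ≤ 0 := by
          intro i
          obtain ⟨D, hD, hDval⟩ := hψ i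
          rw [← hDval]
          set ℓ : ℝ → EuclideanSpace ℝ (Fin n) := fun t => z + t • e i with hℓ
          have hℓz : ℓ 0 = z := by rw [hℓ]; simp
          have hℓmem : ∀ t : ℝ, |t| < ρ → ℓ t ∈ Ω := by
            intro t ht
            apply hρball
            rw [mem_ball]
            rw [show dist (ℓ t) z = ‖t • e i‖ by rw [dist_eq_norm, hℓ]; simp]
            rw [norm_smul, henorm i]
            simpa using ht
          have hℓd : ∀ t : ℝ, HasDerivAt ℓ (e i) t := by
            intro t
            have h1 : HasDerivAt (fun s : ℝ => s • e i) ((1:ℝ) • e i) t :=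
              (hasDerivAt_id t).smul_const (e i)
            rw [one_smul] at h1
            exact h1.const_add z
          have hg : ∀ t : ℝ, |t| < ρ →
              HasDerivAt (fun s => Fo (ℓ s)) ((fun t => Ψ (ℓ t) (e i)) t) t :=
            fun t ht => (hΨ (ℓ t) (hℓmem t ht)).comp_hasDerivAt t (hℓd t)
          have hD0 : HasFDerivAt (fun y => Ψ y (e i)) D (ℓ 0) := by rw [hℓz]; exact hD
          have hg' : HasDerivAt (fun t => Ψ (ℓ t) (e i)) (D (e i)) 0 :=
            hD0.comp_hasDerivAt 0 (hℓd 0)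
          have hmax1 : IsLocalMax (fun t => Fo (ℓ t)) 0 := by
            have hcont : Filter.Tendsto ℓ (𝓝 0) (𝓝 z) := by
              rw [← hℓz]; exact (hℓd 0).continuousAt.tendsto
            show ∀ᶠ t in 𝓝 (0:ℝ), Fo (ℓ t) ≤ Fo (ℓ 0)
            rw [hℓz]
            exact hcont.eventually hlocmax
          exact secondDeriv_nonpos_of_isLocalMax hρpos hg hg' hmax1
        -- sum over i
        have hej : e j0 j0 = 1 := by rw [← he' j0]; simp [EuclideanSpace.single_apply]
        have hsumkey : (∑ i, C (e i) (e i) z) + (∑ i, Bf (e i) (e i))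
            + ε * (Real.exp (K * z j0) * K * K) ≤ 0 := by
          have h2 : ∑ i : Fin n, (C (e i) (e i) z + Bf (e i) (e i)
              + ε * (Real.exp (K * z j0) * (K * e i j0) * (K * e i j0))) ≤ 0 :=
            Finset.sum_nonpos fun i _ => hkey i
          rw [Finset.sum_add_distrib, Finset.sum_add_distrib] at h2
          have h3 : ∑ i : Fin n, ε * (Real.exp (K * z j0) * (K * e i j0) * (K * e i j0))
              = ε * (Real.exp (K * z j0) * K * K) := by
            rw [Finset.sum_eq_single j0]
            · rw [hej]; ring
            · intro i _ hne
              have h4 : e i j0 = 0 := by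
                rw [← he' i, EuclideanSpace.single_apply]
                exact if_neg (fun hc => hne hc.symm)
              rw [h4]; ring
            · intro hnot; exact absurd (Finset.mem_univ j0) hnot
          rw [h3] at h2
          exact h2
        -- Schwarz symmetry for the third derivative
        have hsym2 : ∀ y ∈ Ω, ∀ b c' : EuclideanSpace ℝ (Fin n), DΦ y b c' = DΦ y c' b :=
          fun y hy b c' => ((hφAt y hy).isSymmSndFDerivAt (by simp only [minSmoothness_of_isRCLikeNormedField]; exact WithTop.coe_le_coe.mpr le_top)).eq b c'
        have hCsym1 : ∀ a b : EuclideanSpace ℝ (Fin n), C a b = C b a := fun a b =>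
          ((hΦAt z hzΩ).isSymmSndFDerivAt (by simp only [minSmoothness_of_isRCLikeNormedField]; exact WithTop.coe_le_coe.mpr le_top)).eq a b
        have hCswap : ∀ a b c' : EuclideanSpace ℝ (Fin n), C a b c' = C a c' b := by
          intro a b c'
          have e1 : HasFDerivAt (fun y => DΦ y b c') ((C.flip b).flip c') z :=
            hasFDerivAt_clm_apply_const (hasFDerivAt_clm_apply_const (hDΦdiff z hzΩ) b) c'
          have e2 : HasFDerivAt (fun y => DΦ y c' b) ((C.flip c').flip b) z :=
            hasFDerivAt_clm_apply_const (hasFDerivAt_clm_apply_const (hDΦdiff z hzΩ) c') b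
          have heqf : (fun y => DΦ y b c') =ᶠ[𝓝 z] (fun y => DΦ y c' b) := by
            filter_upwards [isOpen_ball.mem_nhds hzΩ] with y hy using hsym2 y hy b c'
          have e3 : HasFDerivAt (fun y => DΦ y b c') ((C.flip c').flip b) z :=
            e2.congr_of_eventuallyEq heqf
          have h4 := DFunLike.congr_fun (e1.unique e3) a
          simpa only [ContinuousLinearMap.flip_apply] using h4
        have hCzsum : ∑ i, C (e i) (e i) z = ∑ i, C z (e i) (e i) := by
          refine Finset.sum_congr rfl fun i _ => ?_
          calc C (e i) (e i) z = C (e i) z (e i) := hCswap _ _ _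
            _ = C z (e i) (e i) := by rw [hCsym1 (e i) z]
        -- identify lap f z
        have hlapf : lap f z = ∑ i, Bf (e i) (e i) := by
          show ∑ i, fderiv ℝ (fun y => fderiv ℝ f y (EuclideanSpace.single i 1)) z
            (EuclideanSpace.single i 1) = _
          refine Finset.sum_congr rfl fun i _ => ?_
          rw [he' i, ← hFfdef]
          rw [(hasFDerivAt_clm_apply_const hFfdiff (e i)).fderiv]
          simp
        -- the equation for lap φ on Ω and its derivative at z
        set N : EuclideanSpace ℝ (Fin n) → ℝ := fun y => ∑ i, Φ y (e i) * Φ y (e i) with hNdef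
        have hNgradφ : ∀ y ∈ Ω, ‖gradient φ y‖^2 = N y := by
          intro y hy
          rw [hNdef]; dsimp only
          rw [grad_norm_sq φ y]
        have hlapφeq : ∀ y ∈ Ω, (∑ i, DΦ y (e i) (e i)) = N y - V y + l₁ := by
          intro y hy
          have h1 : lap φ y = ∑ i, DΦ y (e i) (e i) := by
            show ∑ i, fderiv ℝ (fun y' => fderiv ℝ φ y' (EuclideanSpace.single i 1)) y
              (EuclideanSpace.single i 1) = _
            refine Finset.sum_congr rfl fun i _ => ?_
            rw [he' i, ← hΦdef]
            rw [(hasFDerivAt_clm_apply_const (hΦdiff y hy) (e i)).fderiv]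
            simp
          rw [← h1, heq y hy, hNgradφ y hy]
        have hEE : (fun y => ∑ i, DΦ y (e i) (e i)) =ᶠ[𝓝 z] (fun y => N y - V y + l₁) := by
          filter_upwards [isOpen_ball.mem_nhds hzΩ] with y hy using hlapφeq y hy
        have hlhsD : HasFDerivAt (fun y => ∑ i, DΦ y (e i) (e i))
            (∑ i, (C.flip (e i)).flip (e i)) z :=
          HasFDerivAt.fun_sum fun i _ =>
            hasFDerivAt_clm_apply_const (hasFDerivAt_clm_apply_const (hDΦdiff z hzΩ) (e i)) (e i)
        have hVdiff : HasFDerivAt V (fderiv ℝ V z) z :=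
          ((hVAt z hzΩ).differentiableAt (by simp)).hasFDerivAt
        have hp1 : ∀ i, HasFDerivAt (fun y => Φ y (e i)) (B.flip (e i)) z := fun i =>
          hasFDerivAt_clm_apply_const (hΦdiff z hzΩ) (e i)
        have hrhsD : HasFDerivAt (fun y => N y - V y + l₁)
            ((∑ i, (Φ z (e i) • B.flip (e i) + Φ z (e i) • B.flip (e i))) - fderiv ℝ V z) z := by
          have hND : HasFDerivAt N
              (∑ i, (Φ z (e i) • B.flip (e i) + Φ z (e i) • B.flip (e i))) z := by
            rw [hNdef]
            exact HasFDerivAt.fun_sum fun i _ => (hp1 i).mul (hp1 i)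
          exact (hND.sub hVdiff).add_const l₁
        have huniq : (∑ i, (C.flip (e i)).flip (e i))
            = (∑ i, (Φ z (e i) • B.flip (e i) + Φ z (e i) • B.flip (e i))) - fderiv ℝ V z :=
          hlhsD.unique (hrhsD.congr_of_eventuallyEq hEE)
        have hsum3 : ∑ i, C z (e i) (e i)
            = (∑ i, (Φ z (e i) * B z (e i) + Φ z (e i) * B z (e i))) - fderiv ℝ V z z := by
          have h4 := DFunLike.congr_fun huniq z
          simpa only [ContinuousLinearMap.coe_sum', Finset.sum_apply,
            ContinuousLinearMap.add_apply, ContinuousLinearMap.sub_apply,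
            ContinuousLinearMap.smul_apply, ContinuousLinearMap.flip_apply, smul_eq_mul] using h4
        -- plug in the first-order condition
        set Ex := Real.exp (K * z j0) with hEx
        have hExpos : 0 < Ex := Real.exp_pos _
        have hBz : ∀ i, B z (e i) = Φ z (e i) - Ff z (e i) - ε * Dh z (e i) := fun i => by
          rw [hBsym z (e i)]; exact hfirst (e i)
        have hDhz : ∀ i, Dh z (e i) = Ex * (K * e i j0) := fun i => by
          rw [hDh, hEx]; simp [PiLp.proj_apply, smul_eq_mul]
        have hsum4 : ∑ i, (Φ z (e i) * B z (e i) + Φ z (e i) * B z (e i))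
            = (∑ i, (2 * (Φ z (e i) * Φ z (e i)) - 2 * (Φ z (e i) * Ff z (e i))))
              - 2 * ε * Ex * K * Φ z (e j0) := by
          have hterm : ∀ i, Φ z (e i) * B z (e i) + Φ z (e i) * B z (e i)
              = (2 * (Φ z (e i) * Φ z (e i)) - 2 * (Φ z (e i) * Ff z (e i)))
                - 2 * ε * Ex * K * (Φ z (e i) * e i j0) := by
            intro i
            rw [hBz i, hDhz i]
            ring
          rw [Finset.sum_congr rfl (fun i _ => hterm i), Finset.sum_sub_distrib]
          congr 1
          have h5 : ∑ i, 2 * ε * Ex * K * (Φ z (e i) * e i j0)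
              = 2 * ε * Ex * K * (Φ z (e j0) * e j0 j0) := by
            refine Finset.sum_eq_single j0 (fun i _ hne => ?_) (fun hnot => ?_)
            · have h4 : e i j0 = 0 := by
                rw [← he' i, EuclideanSpace.single_apply]
                exact if_neg (fun hc => hne hc.symm)
              rw [h4]; ring
            · exact absurd (Finset.mem_univ j0) hnot
          rw [h5, hej]; ring
        -- the subsolution property of f
        have hVinner : ⟪z, gradient V z⟫ = fderiv ℝ V z z := by
          rw [real_inner_comm]; exact InnerProductSpace.toDual_symm_apply
        have hfz : ‖gradient f z‖^2 = ∑ i, Ff z (e i) * Ff z (e i) := by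
          rw [grad_norm_sq f z]
        have hfsubz := hfsub z hzΩ
        rw [hVinner, hfz, hlapf] at hfsubz
        -- bound on the gradient coordinate
        have hgj0 : Φ z (e j0) ≤ M' := by
          have h5 : ‖Φ z (e j0)‖ ≤ ‖Φ z‖ * ‖e j0‖ := (Φ z).le_opNorm _
          rw [henorm j0, mul_one] at h5
          have h6 : ‖Φ z‖ ≤ M := by
            rw [← hΦeq z hzΩ]; exact hM z (ball_subset_closedBall hzΩ)
          calc Φ z (e j0) ≤ ‖Φ z (e j0)‖ := by rw [Real.norm_eq_abs]; exact le_abs_self _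
            _ ≤ M := le_trans h5 h6
            _ ≤ M' := le_max_left _ _
        -- quadratic positivity
        have hquad : 0 ≤ ∑ i, (2 * (Φ z (e i) * Φ z (e i)) - 2 * (Φ z (e i) * Ff z (e i))
            + (1/2) * (Ff z (e i) * Ff z (e i))) :=
          Finset.sum_nonneg fun i _ => by nlinarith [sq_nonneg (Φ z (e i) - (1/2) * Ff z (e i))]
        have hsplit : ∑ i, (2 * (Φ z (e i) * Φ z (e i)) - 2 * (Φ z (e i) * Ff z (e i))
              + (1/2) * (Ff z (e i) * Ff z (e i)))
            = (∑ i, (2 * (Φ z (e i) * Φ z (e i)) - 2 * (Φ z (e i) * Ff z (e i))))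
              + (1/2) * (∑ i, Ff z (e i) * Ff z (e i)) := by
          rw [Finset.sum_add_distrib, Finset.mul_sum]
        have hquad2 : 0 ≤ (∑ i, (2 * (Φ z (e i) * Φ z (e i)) - 2 * (Φ z (e i) * Ff z (e i))))
              + (1/2) * (∑ i, Ff z (e i) * Ff z (e i)) := hsplit ▸ hquad
        -- final contradiction
        rw [hCzsum, hsum3, hsum4] at hsumkey
        have hKM : (0:ℝ) ≤ K - 2 * Φ z (e j0) - 1 := by
          have h7 : K = 2 * M' + 1 := hK
          linarith [hgj0]
        have hP : (0:ℝ) < ε * Ex * K := mul_pos (mul_pos hε hExpos) hKpos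
        have hprod : 0 ≤ ε * Ex * K * (K - 2 * Φ z (e j0) - 1) := mul_nonneg hP.le hKM
        nlinarith [hsumkey, hfsubz, hquad2, hprod, hP]



    have hz_val : F z ≤ Msup + ε * Real.exp (K * R) := by
      have h1 : w' z = f z - 2 * φ z := hw'bd z hzsp
      have h2 : h z ≤ Real.exp (K * R) := by
        apply Real.exp_le_exp.mpr
        have hzR : ‖z‖ = R := by
          have := mem_sphere.mp hzsp; rwa [dist_zero_right] at this
        have hle : z j0 ≤ R := le_trans (le_abs_self _) (le_trans (hcoord z) hzR.le)
        exact mul_le_mul_of_nonneg_left hle hKpos.le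
      calc F z = (f z - 2 * φ z) + ε * h z := by rw [hF]; dsimp only; rw [h1]
        _ ≤ Msup + ε * Real.exp (K * R) :=
          add_le_add (hMle z hzsp) (mul_le_mul_of_nonneg_left h2 hε.le)
    calc w' x₀ ≤ w' x₀ + ε * h x₀ := by nlinarith [hhpos x₀]
      _ = F x₀ := rfl
      _ ≤ F z := hzmax (ball_subset_closedBall hx₀)
      _ ≤ Msup + ε * Real.exp (K * R) := hz_val
  have hfinal : w' x₀ ≤ Msup := by
    refine le_of_forall_pos_le_add fun ε' hε' => ?_
    have hexp : 0 < Real.exp (K * R) := Real.exp_pos _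
    calc w' x₀ ≤ Msup + (ε' / Real.exp (K * R)) * Real.exp (K * R) := key _ (by positivity)
      _ = Msup + ε' := by field_simp
  have hLHS : ⟪x₀, gradient φ x₀⟫ - 2 * φ x₀ + f x₀ = w' x₀ := by
    have h1 : ⟪x₀, gradient φ x₀⟫ = fderiv ℝ φ x₀ x₀ := by
      rw [real_inner_comm]
      exact InnerProductSpace.toDual_symm_apply
    rw [hw']; dsimp only
    rw [h1, hΦeq x₀ hx₀]
  rw [hLHS]; exact hfinal
end

section
/- Let Ω ⊂ ℝⁿ be a bounded convex open set and let u be continuous on the closure of Ω and smooth in Ω. Suppose sup_Ω u² = 1 and this supremum is attained at some point x₁ of the closure of Ω, u vanishes at some point x₀ of the closure of Ω, and |∇u|² ≤ α(1 + k − u²) holds in Ω for constants α > 0 and k > 0. Then diam(Ω) ≥ arcsin( 1/√(1+k) ) / √α. -/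
open scoped RealInnerProductSpace
open Metric Real Set

/-- let `Ω` be a bounded convex open set and `u` continuous on its closure,
smooth inside, with `sup_Ω u² = 1` attained at some point of the closure, vanishing at some
point of the closure, and satisfying `|∇u|² ≤ α(1 + k − u²)` in `Ω` with `α, k > 0`. Then
`diam(Ω) ≥ arcsin(1/√(1+k))/√α`. -/
theorem diameter_lower_bound_from_gradient_estimate
    {n : ℕ} (Ω : Set (EuclideanSpace ℝ (Fin n)))
    (hΩopen : IsOpen Ω) (hΩbdd : Bornology.IsBounded Ω) (hΩconv : Convex ℝ Ω)
    (u : EuclideanSpace ℝ (Fin n) → ℝ) (α k : ℝ) (hα : 0 < α) (hk : 0 < k)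
    (hu_cont : ContinuousOn u (closure Ω))
    (hu_smooth : ContDiffOn ℝ (⊤ : ℕ∞) u Ω)
    (hsup : sSup ((fun x => (u x) ^ 2) '' Ω) = 1)
    (hattained : ∃ x₁ ∈ closure Ω, (u x₁) ^ 2 = 1)
    (hzero : ∃ x₀ ∈ closure Ω, u x₀ = 0)
    (hgrad : ∀ x ∈ Ω, ‖gradient u x‖ ^ 2 ≤ α * (1 + k - (u x) ^ 2)) :
    Real.arcsin (1 / Real.sqrt (1 + k)) / Real.sqrt α ≤ diam Ω := by
  obtain ⟨x₁, hx₁, hux₁⟩ := hattained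
  obtain ⟨x₀, hx₀, hux₀⟩ := hzero
  set c : ℝ := Real.sqrt (1 + k) with hc_def
  have hk1 : (0:ℝ) < 1 + k := by linarith
  have hc : 0 < c := Real.sqrt_pos.mpr hk1
  have hc2 : c ^ 2 = 1 + k := Real.sq_sqrt hk1.le
  have hc1 : 1 < c := by
    have : Real.sqrt 1 < Real.sqrt (1 + k) := Real.sqrt_lt_sqrt (by norm_num) (by linarith)
    simpa using this
  -- u² ≤ 1 on Ω
  have hcomp : IsCompact (closure Ω) := hΩbdd.isCompact_closure
  have hbdd : BddAbove ((fun x => (u x) ^ 2) '' Ω) := by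
    have h1 : BddAbove ((fun x => (u x) ^ 2) '' closure Ω) :=
      (hcomp.bddAbove_image (hu_cont.pow 2))
    exact h1.mono (Set.image_mono subset_closure)
  have hu2le : ∀ x ∈ Ω, (u x) ^ 2 ≤ 1 := by
    intro x hx
    have := le_csSup hbdd ⟨x, hx, rfl⟩
    rwa [hsup] at this
  -- key estimate along segments
  have key : ∀ a ∈ Ω, ∀ b ∈ Ω,
      |Real.arcsin (u b / c) - Real.arcsin (u a / c)| ≤ Real.sqrt α * diam Ω := by
    intro a ha b hb
    set γ : ℝ → EuclideanSpace ℝ (Fin n) := fun t => a + t • (b - a) with hγdef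
    have hγmem : ∀ t ∈ Icc (0:ℝ) 1, γ t ∈ Ω := by
      intro t ht
      have h := hΩconv ha hb (sub_nonneg.mpr ht.2) ht.1 (by ring)
      have : (1 - t) • a + t • b = γ t := by
        simp only [hγdef, smul_sub, sub_smul, one_smul]; abel
      rwa [this] at h
    set d : ℝ → ℝ := fun t =>
      (1 / Real.sqrt (1 - (u (γ t) / c) ^ 2)) * (⟪gradient u (γ t), b - a⟫ / c) with hd_def
    have hderiv : ∀ t ∈ Icc (0:ℝ) 1,
        HasDerivAt (fun t => Real.arcsin (u (γ t) / c)) (d t) t := by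
      intro t ht
      have hx : γ t ∈ Ω := hγmem t ht
      have hγ : HasDerivAt γ (b - a) t := by
        simpa only [id, one_smul] using ((hasDerivAt_id t).smul_const (b - a)).const_add a
      have hdiff : DifferentiableAt ℝ u (γ t) :=
        (hu_smooth.contDiffAt (hΩopen.mem_nhds hx)).differentiableAt (by norm_num)
      have hF : HasFDerivAt u (InnerProductSpace.toDual ℝ _ (gradient u (γ t))) (γ t) :=
        hdiff.hasGradientAt.hasFDerivAt
      have hu' : HasDerivAt (fun t => u (γ t)) ⟪gradient u (γ t), b - a⟫ t := by
        have := hF.comp_hasDerivAt t hγ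
        exact this
      have hw : HasDerivAt (fun t => u (γ t) / c) (⟪gradient u (γ t), b - a⟫ / c) t :=
        hu'.div_const c
      have habsu : |u (γ t)| ≤ 1 := by
        have := Real.sqrt_le_sqrt (hu2le _ hx)
        rwa [Real.sqrt_sq_eq_abs, Real.sqrt_one] at this
      have habs : |u (γ t) / c| < 1 := by
        rw [abs_div, abs_of_pos hc, div_lt_one hc]
        exact lt_of_le_of_lt habsu hc1
      have hne1 : u (γ t) / c ≠ 1 := by
        intro h; rw [h] at habs; simp at habs
      have hne2 : u (γ t) / c ≠ -1 := by
        intro h; rw [h] at habs; simp at habs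
      have harc := Real.hasDerivAt_arcsin hne2 hne1
      have := harc.comp t hw
      simpa [hd_def, Function.comp_def] using this
    have hbound : ∀ t ∈ Icc (0:ℝ) 1, ‖d t‖ ≤ Real.sqrt α * ‖b - a‖ := by
      intro t ht
      have hx : γ t ∈ Ω := hγmem t ht
      set P : ℝ := 1 + k - (u (γ t)) ^ 2 with hP_def
      have hP : 0 < P := by have := hu2le _ hx; simp only [hP_def]; linarith
      have hPs : 0 < Real.sqrt P := Real.sqrt_pos.mpr hP
      have h1 : 1 - (u (γ t) / c) ^ 2 = P / (1 + k) := by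
        rw [div_pow, hc2]; field_simp; rfl
      have h2 : Real.sqrt (1 - (u (γ t) / c) ^ 2) = Real.sqrt P / c := by
        rw [h1, Real.sqrt_div hP.le]
      have hdval : d t = ⟪gradient u (γ t), b - a⟫ / Real.sqrt P := by
        rw [hd_def]; simp only; rw [h2]
        field_simp
      have hinner : |⟪gradient u (γ t), b - a⟫| ≤ ‖gradient u (γ t)‖ * ‖b - a‖ :=
        abs_real_inner_le_norm _ _
      have hgnorm : ‖gradient u (γ t)‖ ≤ Real.sqrt α * Real.sqrt P := by
        have h3 := Real.sqrt_le_sqrt (hgrad _ hx)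
        rwa [Real.sqrt_sq (norm_nonneg _), Real.sqrt_mul hα.le] at h3
      rw [hdval, Real.norm_eq_abs, abs_div, abs_of_pos hPs, div_le_iff₀ hPs]
      calc |⟪gradient u (γ t), b - a⟫| ≤ ‖gradient u (γ t)‖ * ‖b - a‖ := hinner
        _ ≤ (Real.sqrt α * Real.sqrt P) * ‖b - a‖ := by
            exact mul_le_mul_of_nonneg_right hgnorm (norm_nonneg _)
        _ = Real.sqrt α * ‖b - a‖ * Real.sqrt P := by ring
    have hmvt := Convex.norm_image_sub_le_of_norm_hasDerivWithin_le
      (f := fun t => Real.arcsin (u (γ t) / c)) (f' := d)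
      (fun t ht => (hderiv t ht).hasDerivWithinAt) hbound (convex_Icc 0 1)
      (left_mem_Icc.mpr zero_le_one) (right_mem_Icc.mpr zero_le_one)
    have hγ0 : γ 0 = a := by simp [hγdef]
    have hγ1 : γ 1 = b := by simp [hγdef]
    have hdist : ‖b - a‖ ≤ diam Ω := by
      have := dist_le_diam_of_mem hΩbdd hb ha
      rwa [dist_eq_norm] at this
    have : |Real.arcsin (u b / c) - Real.arcsin (u a / c)| ≤ Real.sqrt α * ‖b - a‖ := by
      simpa [hγdef, Real.norm_eq_abs] using hmvt
    calc |Real.arcsin (u b / c) - Real.arcsin (u a / c)|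
        ≤ Real.sqrt α * ‖b - a‖ := this
      _ ≤ Real.sqrt α * diam Ω := mul_le_mul_of_nonneg_left hdist (Real.sqrt_nonneg _)
  -- limit argument
  haveI hF0 : (nhdsWithin x₀ Ω).NeBot := mem_closure_iff_nhdsWithin_neBot.mp hx₀
  haveI hF1 : (nhdsWithin x₁ Ω).NeBot := mem_closure_iff_nhdsWithin_neBot.mp hx₁
  have harccont : Continuous fun y : ℝ => Real.arcsin (y / c) :=
    Real.continuous_arcsin.comp (continuous_id.div_const c)
  have hT0 : Filter.Tendsto (fun a => Real.arcsin (u a / c)) (nhdsWithin x₀ Ω)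
      (nhds (Real.arcsin (u x₀ / c))) :=
    (harccont.continuousAt.tendsto.comp
      ((hu_cont x₀ hx₀).mono_left (nhdsWithin_mono _ subset_closure)))
  have hT1 : Filter.Tendsto (fun a => Real.arcsin (u a / c)) (nhdsWithin x₁ Ω)
      (nhds (Real.arcsin (u x₁ / c))) :=
    (harccont.continuousAt.tendsto.comp
      ((hu_cont x₁ hx₁).mono_left (nhdsWithin_mono _ subset_closure)))
  have htend : Filter.Tendsto
      (fun p : EuclideanSpace ℝ (Fin n) × EuclideanSpace ℝ (Fin n) =>
        |Real.arcsin (u p.2 / c) - Real.arcsin (u p.1 / c)|)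
      ((nhdsWithin x₀ Ω) ×ˢ (nhdsWithin x₁ Ω))
      (nhds (|Real.arcsin (u x₁ / c) - Real.arcsin (u x₀ / c)|)) :=
    ((hT1.comp Filter.tendsto_snd).sub (hT0.comp Filter.tendsto_fst)).abs
  have hev : ∀ᶠ p : EuclideanSpace ℝ (Fin n) × EuclideanSpace ℝ (Fin n) in
      (nhdsWithin x₀ Ω) ×ˢ (nhdsWithin x₁ Ω),
      |Real.arcsin (u p.2 / c) - Real.arcsin (u p.1 / c)| ≤ Real.sqrt α * diam Ω := by
    filter_upwards [Filter.prod_mem_prod self_mem_nhdsWithin self_mem_nhdsWithin] with p hp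
    exact key p.1 hp.1 p.2 hp.2
  have hlim : |Real.arcsin (u x₁ / c) - Real.arcsin (u x₀ / c)| ≤ Real.sqrt α * diam Ω :=
    le_of_tendsto htend hev
  have habs1 : |u x₁| = 1 := by
    rw [← Real.sqrt_one, ← hux₁, Real.sqrt_sq_eq_abs]
  have harcnn : 0 ≤ Real.arcsin (1 / c) :=
    Real.arcsin_nonneg.mpr (by positivity)
  have hfinal : Real.arcsin (1 / c) ≤ Real.sqrt α * diam Ω := by
    rcases abs_eq (by norm_num : (0:ℝ) ≤ 1) |>.mp habs1 with h | h
    · rw [hux₀, h, zero_div, Real.arcsin_zero, sub_zero, abs_of_nonneg harcnn] at hlim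
      exact hlim
    · rw [hux₀, h] at hlim
      have hneg : (-1 : ℝ) / c = -(1 / c) := by ring
      rw [hneg, Real.arcsin_neg, zero_div, Real.arcsin_zero, sub_zero, abs_neg,
        abs_of_nonneg harcnn] at hlim
      exact hlim
  have hαs : 0 < Real.sqrt α := Real.sqrt_pos.mpr hα
  rw [div_le_iff₀ hαs]
  linarith [hfinal]
end

section
/- Let Ω ⊂ ℝⁿ be a bounded convex open set and let u be continuous on the closure of Ω and smooth in Ω. Suppose u attains the value M = sup_Ω u > 0 and the value 0 on the closure of Ω; fix ε > 0 and set c = (1+ε)M. If for a constant α > 0 the inequality |∇u(x)| ≤ √α · (c − u(x)) · √( log( c/(c − u(x)) ) ) holds at every point x of Ω where u(x) ≥ 0, then log(1 + 1/ε) ≤ α · diam(Ω)²/4. -/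
open scoped RealInnerProductSpace
open Metric Real Set

lemma mvt_key {n : ℕ} {Ω : Set (EuclideanSpace ℝ (Fin n))} (hΩopen : IsOpen Ω)
    {u : EuclideanSpace ℝ (Fin n) → ℝ} {α c : ℝ}
    (hu_smooth : ContDiffOn ℝ (⊤ : ℕ∞) u Ω)
    (hcu : ∀ x ∈ Ω, 0 < c - u x) (hc : 0 < c)
    (hgrad : ∀ x ∈ Ω, 0 ≤ u x →
      ‖gradient u x‖ ≤ Real.sqrt α * (c - u x) * Real.sqrt (Real.log (c / (c - u x))))
    {a b : EuclideanSpace ℝ (Fin n)} (hseg : segment ℝ a b ⊆ Ω)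
    (hpos : ∀ z ∈ segment ℝ a b, 0 < u z) :
    Real.sqrt (Real.log (c / (c - u a))) - Real.sqrt (Real.log (c / (c - u b)))
      ≤ Real.sqrt α / 2 * ‖a - b‖ := by
  set v : EuclideanSpace ℝ (Fin n) → ℝ := fun x => Real.sqrt (Real.log (c / (c - u x))) with hv
  set f' : EuclideanSpace ℝ (Fin n) → (EuclideanSpace ℝ (Fin n)) →L[ℝ] ℝ :=
    fun z => ((1 / (2 * Real.sqrt (Real.log (c / (c - u z))))) * (c - u z)⁻¹) • fderiv ℝ u z
    with hf'
  have hlogpos : ∀ z ∈ segment ℝ a b, 0 < Real.log (c / (c - u z)) := by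
    intro z hz
    have hzΩ := hseg hz
    have h1 := hcu z hzΩ
    have h2 := hpos z hz
    apply Real.log_pos
    rw [one_lt_div h1]
    linarith
  have hderiv : ∀ z ∈ segment ℝ a b, HasFDerivWithinAt v (f' z) (segment ℝ a b) z := by
    intro z hz
    have hzΩ := hseg hz
    have hdiff : DifferentiableAt ℝ u z :=
      ((hu_smooth.contDiffAt (hΩopen.mem_nhds hzΩ)).differentiableAt (by simp))
    have hdu : HasFDerivAt u (fderiv ℝ u z) z := hdiff.hasFDerivAt
    have h1 : HasFDerivAt (fun x => c - u x) (-(fderiv ℝ u z)) z := hdu.const_sub c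
    have h2 : HasFDerivAt (fun x => Real.log (c - u x)) ((c - u z)⁻¹ • -(fderiv ℝ u z)) z :=
      h1.log (ne_of_gt (hcu z hzΩ))
    have h3 : HasFDerivAt (fun x => Real.log c - Real.log (c - u x))
        (-((c - u z)⁻¹ • -(fderiv ℝ u z))) z := h2.const_sub _
    have heq : (fun x => Real.log (c / (c - u x))) =ᶠ[nhds z]
        (fun x => Real.log c - Real.log (c - u x)) := by
      filter_upwards [hΩopen.mem_nhds hzΩ] with x hx
      rw [Real.log_div (ne_of_gt hc) (ne_of_gt (hcu x hx))]
    have h4 : HasFDerivAt (fun x => Real.log (c / (c - u x)))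
        (-((c - u z)⁻¹ • -(fderiv ℝ u z))) z := h3.congr_of_eventuallyEq heq
    have h5 := h4.sqrt (ne_of_gt (hlogpos z hz))
    have : ((1 / (2 * Real.sqrt (Real.log (c / (c - u z))))) •
        (-((c - u z)⁻¹ • -(fderiv ℝ u z)))) = f' z := by
      rw [hf']
      simp [smul_smul]
    rw [this] at h5
    exact h5.hasFDerivWithinAt
  have hbound : ∀ z ∈ segment ℝ a b, ‖f' z‖ ≤ Real.sqrt α / 2 := by
    intro z hz
    have hzΩ := hseg hz
    have hcuz := hcu z hzΩ
    have hlz := hlogpos z hz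
    have hsl : 0 < Real.sqrt (Real.log (c / (c - u z))) := Real.sqrt_pos.2 hlz
    have hgnorm : ‖fderiv ℝ u z‖ = ‖gradient u z‖ := by
      have : gradient u z = (InnerProductSpace.toDual ℝ _).symm (fderiv ℝ u z) := rfl
      rw [this, LinearIsometryEquiv.norm_map]
    have hg := hgrad z hzΩ (le_of_lt (hpos z hz))
    have hns := norm_smul (1 / (2 * Real.sqrt (Real.log (c / (c - u z)))) * (c - u z)⁻¹)
      (fderiv ℝ u z)
    rw [hf']
    beta_reduce
    rw [hns, Real.norm_eq_abs]
    have habs : |1 / (2 * Real.sqrt (Real.log (c / (c - u z)))) * (c - u z)⁻¹|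
        = 1 / (2 * Real.sqrt (Real.log (c / (c - u z)))) * (c - u z)⁻¹ := by
      rw [abs_of_pos]
      positivity
    rw [habs, hgnorm]
    calc 1 / (2 * Real.sqrt (Real.log (c / (c - u z)))) * (c - u z)⁻¹ * ‖gradient u z‖
        ≤ 1 / (2 * Real.sqrt (Real.log (c / (c - u z)))) * (c - u z)⁻¹ *
          (Real.sqrt α * (c - u z) * Real.sqrt (Real.log (c / (c - u z)))) := by
          apply mul_le_mul_of_nonneg_left hg
          positivity
      _ = Real.sqrt α / 2 := by
          field_simp
  have := (convex_segment a b).norm_image_sub_le_of_norm_hasFDerivWithin_le hderiv hbound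
    (right_mem_segment ℝ a b) (left_mem_segment ℝ a b)
  rw [Real.norm_eq_abs] at this
  have h2 := le_trans (le_abs_self _) this
  calc v a - v b ≤ Real.sqrt α / 2 * ‖a - b‖ := h2


/-- let `Ω` be a bounded convex open set and `u` continuous on its closure,
smooth inside, attaining the value `M = sup_Ω u > 0` and the value `0` on the closure.
Fix `ε > 0` and set `c = (1+ε)M`.  If for a constant `α > 0` one has
`|∇u| ≤ √α·(c − u)·√(log(c/(c − u)))` wherever `u ≥ 0` in `Ω`, then
`log(1 + 1/ε) ≤ α·diam(Ω)²/4`. -/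
theorem log_gradient_estimate_integration
    {n : ℕ} (Ω : Set (EuclideanSpace ℝ (Fin n)))
    (hΩopen : IsOpen Ω) (hΩbdd : Bornology.IsBounded Ω) (hΩconv : Convex ℝ Ω)
    (u : EuclideanSpace ℝ (Fin n) → ℝ) (α ε : ℝ) (hα : 0 < α) (hε : 0 < ε)
    (hu_cont : ContinuousOn u (closure Ω))
    (hu_smooth : ContDiffOn ℝ (⊤ : ℕ∞) u Ω)
    (hM_pos : 0 < sSup (u '' Ω))
    (hattained : ∃ x₁ ∈ closure Ω, u x₁ = sSup (u '' Ω))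
    (hzero : ∃ x₀ ∈ closure Ω, u x₀ = 0)
    (hgrad : ∀ x ∈ Ω, 0 ≤ u x →
      ‖gradient u x‖ ≤ Real.sqrt α * ((1 + ε) * sSup (u '' Ω) - u x) *
        Real.sqrt (Real.log ((1 + ε) * sSup (u '' Ω) / ((1 + ε) * sSup (u '' Ω) - u x)))) :
    Real.log (1 + 1 / ε) ≤ α * (diam Ω) ^ 2 / 4 := by
  obtain ⟨x₁, hx₁c, hux₁⟩ := hattained
  obtain ⟨x₀, hx₀c, hux₀⟩ := hzero
  set M := sSup (u '' Ω) with hMdef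
  set c := (1 + ε) * M with hcdef
  have hMpos : 0 < M := hM_pos
  have hεM : 0 < ε * M := mul_pos hε hMpos
  have hcM : M < c := by rw [hcdef]; nlinarith
  have hcpos : 0 < c := lt_trans hMpos hcM
  have hcomp : IsCompact (closure Ω) := hΩbdd.isCompact_closure
  have hBdd : BddAbove (u '' Ω) := by
    have h1 : IsCompact (u '' closure Ω) := hcomp.image_of_continuousOn hu_cont
    exact h1.bddAbove.mono (image_mono subset_closure)
  have hle : ∀ x ∈ Ω, u x ≤ M := fun x hx => le_csSup hBdd ⟨x, hx, rfl⟩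
  have hcu : ∀ x ∈ Ω, 0 < c - u x := fun x hx => by have := hle x hx; linarith
  have main : ∀ δ : ℝ, 0 < δ → δ < M / 2 →
      Real.sqrt (Real.log (c / (ε * M + δ))) ≤
        Real.sqrt α / 2 * diam Ω + Real.sqrt (Real.log (c / (c - δ / 2))) := by
    intro δ hδ hδM
    obtain ⟨a, haΩ, hua⟩ : ∃ a ∈ Ω, M - δ < u a := by
      have hne : (nhdsWithin x₁ Ω).NeBot := mem_closure_iff_nhdsWithin_neBot.1 hx₁c
      have ht : Filter.Tendsto u (nhdsWithin x₁ Ω) (nhds M) := by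
        have h := (hu_cont x₁ hx₁c).mono (subset_closure (s := Ω))
        rwa [ContinuousWithinAt, hux₁] at h
      have hev : ∀ᶠ x in nhdsWithin x₁ Ω, M - δ < u x :=
        ht.eventually (eventually_gt_nhds (by linarith))
      obtain ⟨a, h1, h2⟩ := (hev.and eventually_mem_nhdsWithin).exists
      exact ⟨a, h2, h1⟩
    obtain ⟨b, hbΩ, hub⟩ : ∃ b ∈ Ω, u b < δ / 2 := by
      have hne : (nhdsWithin x₀ Ω).NeBot := mem_closure_iff_nhdsWithin_neBot.1 hx₀c
      have ht : Filter.Tendsto u (nhdsWithin x₀ Ω) (nhds 0) := by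
        have h := (hu_cont x₀ hx₀c).mono (subset_closure (s := Ω))
        rwa [ContinuousWithinAt, hux₀] at h
      have hev : ∀ᶠ x in nhdsWithin x₀ Ω, u x < δ / 2 :=
        ht.eventually (eventually_lt_nhds (by linarith))
      obtain ⟨b, h1, h2⟩ := (hev.and eventually_mem_nhdsWithin).exists
      exact ⟨b, h2, h1⟩
    set γ : ℝ → EuclideanSpace ℝ (Fin n) := fun t => a + t • (b - a) with hγ
    have hγΩ : ∀ t ∈ Icc (0:ℝ) 1, γ t ∈ Ω := fun t ht => hΩconv.add_smul_sub_mem haΩ hbΩ ht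
    have hγcont : Continuous γ := by fun_prop
    set S : Set ℝ := Icc (0:ℝ) 1 ∩ (u ∘ γ) ⁻¹' Iic (δ / 2) with hS
    have hScl : IsClosed S := by
      apply ContinuousOn.preimage_isClosed_of_isClosed _ isClosed_Icc isClosed_Iic
      exact hu_smooth.continuousOn.comp hγcont.continuousOn (fun t ht => hγΩ t ht)
    have hγ1 : γ 1 = b := by simp [hγ]
    have hγ0 : γ 0 = a := by simp [hγ]
    have hSne : S.Nonempty := ⟨1, ⟨zero_le_one, le_refl 1⟩, by
      simp only [mem_preimage, Function.comp_apply, hγ1, mem_Iic]; linarith⟩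
    have hbdd : BddBelow S := ⟨0, fun t ht => ht.1.1⟩
    set t₀ := sInf S with ht₀def
    have ht₀S : t₀ ∈ S := hScl.csInf_mem hSne hbdd
    have ht₀Icc : t₀ ∈ Icc (0:ℝ) 1 := ht₀S.1
    have ht₀le : u (γ t₀) ≤ δ / 2 := ht₀S.2
    have hlt : ∀ t, 0 ≤ t → t < t₀ → δ / 2 < u (γ t) := by
      intro t ht0 htt₀
      by_contra h
      push_neg at h
      have hmem : t ∈ S := ⟨⟨ht0, le_trans htt₀.le ht₀Icc.2⟩, h⟩
      exact absurd (csInf_le hbdd hmem) (not_le.2 htt₀)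
    have ht₀pos : 0 < t₀ := by
      rcases ht₀Icc.1.lt_or_eq with h | h
      · exact h
      · exfalso
        rw [← h, hγ0] at ht₀le
        linarith
    have hge : δ / 2 ≤ u (γ t₀) := by
      have hcont : ContinuousAt (u ∘ γ) t₀ := by
        have h1 : ContinuousAt u (γ t₀) :=
          hu_smooth.continuousOn.continuousAt (hΩopen.mem_nhds (hγΩ t₀ ht₀Icc))
        exact h1.comp hγcont.continuousAt
      have htd : Filter.Tendsto (u ∘ γ) (nhdsWithin t₀ (Iio t₀)) (nhds (u (γ t₀))) :=
        hcont.tendsto.mono_left nhdsWithin_le_nhds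
      apply ge_of_tendsto htd
      have hev1 : ∀ᶠ t in nhdsWithin t₀ (Iio t₀), (0:ℝ) < t :=
        eventually_nhdsWithin_of_eventually_nhds (eventually_gt_nhds ht₀pos)
      filter_upwards [hev1, eventually_mem_nhdsWithin] with t h1 h2
      exact (hlt t h1.le h2).le
    set y := γ t₀ with hydef
    have hyΩ : y ∈ Ω := hγΩ t₀ ht₀Icc
    have hparam : ∀ z ∈ segment ℝ a y, ∃ t, 0 ≤ t ∧ t ≤ t₀ ∧ z = γ t := by
      intro z hz
      rw [segment_eq_image'] at hz
      obtain ⟨σ, hσ, rfl⟩ := hz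
      refine ⟨σ * t₀, mul_nonneg hσ.1 ht₀Icc.1, ?_, ?_⟩
      · calc σ * t₀ ≤ 1 * t₀ := mul_le_mul_of_nonneg_right hσ.2 ht₀Icc.1
          _ = t₀ := one_mul _
      · have hya : y - a = t₀ • (b - a) := by
          rw [hydef]
          show a + t₀ • (b - a) - a = t₀ • (b - a)
          exact add_sub_cancel_left a _
        show a + σ • (y - a) = γ (σ * t₀)
        rw [hya, smul_smul]
    have hsegΩ : segment ℝ a y ⊆ Ω := by
      intro z hz
      obtain ⟨t, h0, h1, rfl⟩ := hparam z hz
      exact hγΩ t ⟨h0, le_trans h1 ht₀Icc.2⟩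
    have hsegpos : ∀ z ∈ segment ℝ a y, 0 < u z := by
      intro z hz
      obtain ⟨t, h0, h1, rfl⟩ := hparam z hz
      rcases h1.lt_or_eq with h | h
      · linarith [hlt t h0 h]
      · rw [h]; linarith
    have hkey := mvt_key hΩopen hu_smooth hcu hcpos hgrad hsegΩ hsegpos
    have hdist : ‖a - y‖ ≤ diam Ω := by
      rw [← dist_eq_norm]
      exact dist_le_diam_of_mem hΩbdd haΩ hyΩ
    have hcua : 0 < c - u a := hcu a haΩ
    have hva : Real.sqrt (Real.log (c / (ε * M + δ))) ≤
        Real.sqrt (Real.log (c / (c - u a))) := by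
      have h2 : c - u a ≤ ε * M + δ := by
        rw [hcdef] at *
        nlinarith
      gcongr
    have hcuy : 0 < c - u y := hcu y hyΩ
    have hcδ : 0 < c - δ / 2 := by nlinarith
    have hvy : Real.sqrt (Real.log (c / (c - u y))) ≤
        Real.sqrt (Real.log (c / (c - δ / 2))) := by
      have h3 : c - δ / 2 ≤ c - u y := by linarith
      gcongr
    have hmul : Real.sqrt α / 2 * ‖a - y‖ ≤ Real.sqrt α / 2 * diam Ω :=
      mul_le_mul_of_nonneg_left hdist (by positivity)
    linarith
  have hlim1 : Filter.Tendsto (fun δ : ℝ => Real.sqrt (Real.log (c / (ε * M + δ))))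
      (nhdsWithin 0 (Ioi 0)) (nhds (Real.sqrt (Real.log (c / (ε * M))))) := by
    have hconts : ContinuousAt (fun δ : ℝ => Real.sqrt (Real.log (c / (ε * M + δ)))) 0 := by
      have hc1 : ContinuousAt (fun δ : ℝ => c / (ε * M + δ)) 0 :=
        continuousAt_const.div ((continuous_const.add continuous_id).continuousAt)
          (by simpa using hεM.ne')
      have hc2 : ContinuousAt (fun δ : ℝ => Real.log (c / (ε * M + δ))) 0 :=
        (Real.continuousAt_log (by simp only [add_zero]; positivity)).comp hc1
      exact Real.continuous_sqrt.continuousAt.comp hc2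
    have h := hconts.continuousWithinAt (s := Ioi (0:ℝ))
    simpa [ContinuousWithinAt] using h
  have hlim2 : Filter.Tendsto
      (fun δ : ℝ => Real.sqrt α / 2 * diam Ω + Real.sqrt (Real.log (c / (c - δ / 2))))
      (nhdsWithin 0 (Ioi 0)) (nhds (Real.sqrt α / 2 * diam Ω + 0)) := by
    have hconts : ContinuousAt
        (fun δ : ℝ => Real.sqrt α / 2 * diam Ω + Real.sqrt (Real.log (c / (c - δ / 2)))) 0 := by
      apply continuousAt_const.add
      have hc1 : ContinuousAt (fun δ : ℝ => c / (c - δ / 2)) 0 :=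
        continuousAt_const.div
          ((continuous_const.sub (continuous_id.div_const 2)).continuousAt)
          (by simpa using hcpos.ne')
      have hc2 : ContinuousAt (fun δ : ℝ => Real.log (c / (c - δ / 2))) 0 :=
        (Real.continuousAt_log (by simp only [zero_div, sub_zero]; positivity)).comp hc1
      exact Real.continuous_sqrt.continuousAt.comp hc2
    have h := hconts.continuousWithinAt (s := Ioi (0:ℝ))
    rw [ContinuousWithinAt] at h
    simpa [div_self hcpos.ne'] using h
  have hfin : Real.sqrt (Real.log (c / (ε * M))) ≤ Real.sqrt α / 2 * diam Ω + 0 := by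
    apply le_of_tendsto_of_tendsto hlim1 hlim2
    filter_upwards [Ioo_mem_nhdsGT (half_pos hMpos)] with δ hδ
    exact main δ hδ.1 hδ.2
  rw [add_zero] at hfin
  have hceq : c / (ε * M) = 1 + 1 / ε := by
    rw [hcdef]
    field_simp
    ring
  rw [hceq] at hfin
  have hL : 0 ≤ Real.log (1 + 1 / ε) := Real.log_nonneg (by
    have : 0 < 1 / ε := by positivity
    linarith)
  calc Real.log (1 + 1 / ε) = Real.sqrt (Real.log (1 + 1 / ε)) ^ 2 := (Real.sq_sqrt hL).symm
    _ ≤ (Real.sqrt α / 2 * diam Ω) ^ 2 := pow_le_pow_left₀ (Real.sqrt_nonneg _) hfin 2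
    _ = α * diam Ω ^ 2 / 4 := by
        rw [mul_pow, div_pow, Real.sq_sqrt hα.le]
        ring
end

section
/- Let Ω ⊂ ℝⁿ be a bounded open set with smooth boundary, let φ be smooth on the closure of Ω with Δφ = |∇φ|² − V + λ₁ in Ω, and let ρ be smooth on the closure of Ω with ρ ≥ 0 and ρ = 0 on ∂Ω. Suppose the function ρ²Δφ attains its maximum over the closure of Ω at an interior point x₀ ∈ Ω with (ρ²Δφ)(x₀) > 0. Then, with all quantities evaluated at x₀, 0 ≥ 2(ρΔρ − 3|∇ρ|²)·(ρ²Δφ) + (2/n)(ρ²Δφ)² − 4(ρ²Δφ)·|∇ρ|·( √(ρ²Δφ) + ρ·√(max(V − λ₁, 0)) ) − ρ⁴ ΔV. -/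
open scoped RealInnerProductSpace
open Metric Real Set

noncomputable section
variable {n : ℕ}
local notation "E" => EuclideanSpace ℝ (Fin n)

/-- partial derivative in direction `v` -/
noncomputable def Dv {n : ℕ} (v : EuclideanSpace ℝ (Fin n)) (f : EuclideanSpace ℝ (Fin n) → ℝ)
    (x : EuclideanSpace ℝ (Fin n)) : ℝ := fderiv ℝ f x v

lemma contDiffAt_Dv {f : E → ℝ} {x : E} (hf : ContDiffAt ℝ (⊤ : ℕ∞) f x) (v : E) :
    ContDiffAt ℝ (⊤ : ℕ∞) (Dv v f) x := by
  exact (hf.fderiv_right (m := ((⊤ : ℕ∞) : WithTop ℕ∞)) (by simp)).clm_apply contDiffAt_const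
end

noncomputable section
variable {n : ℕ}
local notation "E" => EuclideanSpace ℝ (Fin n)

lemma contDiffAt_fderiv {f : E → ℝ} {x : E} (hf : ContDiffAt ℝ (⊤ : ℕ∞) f x) :
    ContDiffAt ℝ (⊤ : ℕ∞) (fderiv ℝ f) x := by
  exact hf.fderiv_right (m := ((⊤ : ℕ∞) : WithTop ℕ∞)) (by simp)

lemma hasFDerivAt_Dv {f : E → ℝ} {x : E} (hf : ContDiffAt ℝ (⊤ : ℕ∞) f x) (v : E) :
    HasFDerivAt (Dv v f) ((ContinuousLinearMap.apply ℝ ℝ v).comp (fderiv ℝ (fderiv ℝ f) x)) x :=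
  (ContinuousLinearMap.apply ℝ ℝ v).hasFDerivAt.comp x
    ((contDiffAt_fderiv hf).differentiableAt (by simp)).hasFDerivAt |>.congr_of_eventuallyEq
    (by filter_upwards with y; rfl)

lemma clairaut {f : E → ℝ} {x : E} (hf : ContDiffAt ℝ (⊤ : ℕ∞) f x) (v w : E) :
    Dv w (Dv v f) x = Dv v (Dv w f) x := by
  have h1 := (hasFDerivAt_Dv hf v).fderiv
  have h2 := (hasFDerivAt_Dv hf w).fderiv
  have hs : fderiv ℝ (fderiv ℝ f) x w v = fderiv ℝ (fderiv ℝ f) x v w := by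
    have := hf.isSymmSndFDerivAt (by rw [minSmoothness_of_isRCLikeNormedField]; exact WithTop.coe_le_coe.2 (le_top : ((2:ℕ) : ℕ∞) ≤ ⊤))
    exact (this w v)
  simp only [Dv] at *
  rw [h1, h2]
  simpa using hs

lemma dv_congr {f g : E → ℝ} {x : E} (h : f =ᶠ[nhds x] g) (v : E) : Dv v f x = Dv v g x := by
  rw [Dv, Dv, h.fderiv_eq]

lemma dv_mul {f g : E → ℝ} {x : E} (hf : DifferentiableAt ℝ f x) (hg : DifferentiableAt ℝ g x)
    (v : E) : Dv v (fun y => f y * g y) x = Dv v f x * g x + f x * Dv v g x := by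
  simp only [Dv]
  rw [fderiv_fun_mul hf hg]
  simp only [ContinuousLinearMap.add_apply, ContinuousLinearMap.smul_apply, smul_eq_mul]
  ring

lemma dv_sum {ι : Type*} {s : Finset ι} {f : ι → E → ℝ} {x : E}
    (hf : ∀ i ∈ s, DifferentiableAt ℝ (f i) x) (v : E) :
    Dv v (fun y => ∑ i ∈ s, f i y) x = ∑ i ∈ s, Dv v (f i) x := by
  simp only [Dv]
  rw [fderiv_fun_sum hf]
  simp

lemma dv_add {f g : E → ℝ} {x : E} (hf : DifferentiableAt ℝ f x) (hg : DifferentiableAt ℝ g x)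
    (v : E) : Dv v (fun y => f y + g y) x = Dv v f x + Dv v g x := by
  simp only [Dv]; rw [fderiv_fun_add hf hg]; simp

lemma dv_sub {f g : E → ℝ} {x : E} (hf : DifferentiableAt ℝ f x) (hg : DifferentiableAt ℝ g x)
    (v : E) : Dv v (fun y => f y - g y) x = Dv v f x - Dv v g x := by
  simp only [Dv]; rw [fderiv_fun_sub hf hg]; simp

lemma dv_add_const {f : E → ℝ} {x : E} (c : ℝ) (v : E) :
    Dv v (fun y => f y + c) x = Dv v f x := by
  simp only [Dv]; rw [fderiv_add_const]

/-- 1-D second derivative test: at a local max, the second derivative is nonpositive. -/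
lemma sdt {g : ℝ → ℝ} {a : ℝ} (hg : ContDiffAt ℝ (⊤ : ℕ∞) g a) (hm : IsLocalMax g a) :
    deriv (deriv g) a ≤ 0 := by
  by_contra h
  push_neg at h
  have hd0 : deriv g a = 0 := hm.deriv_eq_zero
  -- get C¹ on an interval around a
  obtain ⟨u, hu, hgu⟩ := hg.contDiffOn (m := 1) (by simp) (by simp)
  obtain ⟨ε₀, hε₀, hball⟩ := Metric.mem_nhds_iff.1 hu
  have hderivat : HasDerivAt (deriv g) (deriv (deriv g) a) a := by
    have h1 : ContDiffAt ℝ (⊤ : ℕ∞) (deriv g) a := by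
      exact (hg.fderiv_right (m := ((⊤ : ℕ∞) : WithTop ℕ∞)) (by simp)).clm_apply contDiffAt_const
    exact ((h1.differentiableAt (by simp)).hasDerivAt)
  -- slope of deriv g tends to positive number, so deriv g > 0 right of a
  have hslope := hasDerivAt_iff_tendsto_slope.1 hderivat
  have hpos : ∀ᶠ t in nhdsWithin a {a}ᶜ, 0 < slope (deriv g) a t :=
    hslope (Ioi_mem_nhds h)
  rw [eventually_nhdsWithin_iff] at hpos
  obtain ⟨δ, hδ, hδpos⟩ := Metric.eventually_nhds_iff.1 hpos
  obtain ⟨ε₁, hε₁, hmax⟩ := Metric.eventually_nhds_iff.1 hm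
  set b := a + min (min δ ε₀) ε₁ / 2 with hb
  have hablt : a < b := by
    have : 0 < min (min δ ε₀) ε₁ := lt_min (lt_min hδ hε₀) hε₁
    simp only [hb]; linarith
  have hbmem : ∀ t ∈ Icc a b, dist t a < min (min δ ε₀) ε₁ := by
    intro t ht
    rw [Real.dist_eq, abs_sub_lt_iff]
    constructor
    · have := ht.2; simp only [hb] at this ⊢; linarith [lt_min (lt_min hδ hε₀) hε₁]
    · have := ht.1; linarith [lt_min (lt_min hδ hε₀) hε₁]
  have hmono : StrictMonoOn g (Icc a b) := by
    apply strictMonoOn_of_deriv_pos (convex_Icc a b)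
    · apply (hgu.continuousOn).mono
      intro t ht
      apply hball
      exact Metric.mem_ball.2 (lt_of_lt_of_le (hbmem t ht) (le_trans (min_le_left _ _) (min_le_right _ _)))
    · intro t ht
      rw [interior_Icc] at ht
      have htne : t ≠ a := ne_of_gt ht.1
      have hslt : 0 < slope (deriv g) a t := by
        apply hδpos (lt_of_lt_of_le (hbmem t ⟨le_of_lt ht.1, le_of_lt ht.2⟩)
          (le_trans (min_le_left _ _) (min_le_left _ _))) (by simpa using htne)
      rw [slope_def_field, hd0, sub_zero, div_pos_iff] at hslt
      rcases hslt with ⟨h1, _⟩ | ⟨_, h2⟩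
      · exact h1
      · linarith [ht.1]
  have : g a < g b := hmono (left_mem_Icc.2 (le_of_lt hablt)) (right_mem_Icc.2 (le_of_lt hablt)) hablt
  have : g b ≤ g a := hmax (lt_of_lt_of_le (hbmem b (right_mem_Icc.2 (le_of_lt hablt))) (min_le_right _ _))
  linarith

lemma sdt_multi {F : E → ℝ} {x : E} (hF : ContDiffAt ℝ (⊤ : ℕ∞) F x) (hm : IsLocalMax F x) (v : E) :
    Dv v (Dv v F) x ≤ 0 := by
  set γ : ℝ → E := fun s => x + s • v with hγdef
  have hγ0 : γ 0 = x := by simp [hγdef]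
  have hγc : Continuous γ := continuous_const.add (continuous_id.smul continuous_const)
  have hγd : ∀ t : ℝ, HasDerivAt γ v t := by
    intro t
    simpa [hγdef] using ((hasDerivAt_id t).smul_const v).const_add x
  set g : ℝ → ℝ := fun s => F (γ s) with hgdef
  -- C^∞ of g at 0
  have hγcd : ContDiffAt ℝ (⊤ : ℕ∞) γ 0 := (contDiff_const.add (contDiff_id.smul contDiff_const)).contDiffAt
  have hg : ContDiffAt ℝ (⊤ : ℕ∞) g 0 := by
    have hF' : ContDiffAt ℝ (⊤ : ℕ∞) F (γ 0) := by rw [hγ0]; exact hF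
    exact hF'.comp (0 : ℝ) hγcd
  have hγt : Filter.Tendsto γ (nhds 0) (nhds x) := by
    rw [← hγ0]; exact hγc.continuousAt
  have hmg : IsLocalMax g 0 := by
    have : ∀ᶠ s in nhds (0:ℝ), F (γ s) ≤ F x := hγt.eventually hm
    filter_upwards [this] with s hs
    simpa [hgdef, hγ0] using hs
  obtain ⟨u, hu, hFu⟩ := hF.contDiffOn (m := 1) (by simp) (by simp)
  obtain ⟨t, hts, hto, hxt⟩ := _root_.mem_nhds_iff.1 hu
  have hFt : ContDiffOn ℝ 1 F t := hFu.mono hts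
  have hev : ∀ᶠ s in nhds (0:ℝ), γ s ∈ t := hγt.eventually (hto.eventually_mem hxt)
  have hder : ∀ᶠ s in nhds (0:ℝ), HasDerivAt g (Dv v F (γ s)) s := by
    filter_upwards [hev] with s hs
    exact (((hFt.contDiffAt (hto.mem_nhds hs)).differentiableAt
      (by simp)).hasFDerivAt.comp_hasDerivAt s (hγd s))
  have hdg : deriv g =ᶠ[nhds (0:ℝ)] fun s => Dv v F (γ s) :=
    hder.mono fun s hs => hs.deriv
  have hsecond : HasDerivAt (fun s => Dv v F (γ s)) (Dv v (Dv v F) x) 0 := by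
    have h1 : HasFDerivAt (Dv v F) (fderiv ℝ (Dv v F) x) (γ 0) := by
      rw [hγ0]
      exact (((contDiffAt_Dv hF v)).differentiableAt (by simp)).hasFDerivAt
    exact h1.comp_hasDerivAt 0 (hγd 0)
  have hkey : deriv (deriv g) 0 = Dv v (Dv v F) x := by
    rw [hdg.deriv_eq, hsecond.deriv]
  rw [← hkey]
  exact sdt hg hmg


lemma grad_coord_s17 {f : E → ℝ} {x : E} (hf : DifferentiableAt ℝ f x) (i : Fin n) :
    gradient f x i = Dv (EuclideanSpace.single i 1) f x := by
  have h1 := hf.hasGradientAt.hasFDerivAt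
  have h2 : fderiv ℝ f x = (InnerProductSpace.toDual ℝ (EuclideanSpace ℝ (Fin n))) (gradient f x) :=
    h1.fderiv
  have : Dv (EuclideanSpace.single i 1) f x
      = inner ℝ (gradient f x) (EuclideanSpace.single i (1:ℝ)) := by
    rw [Dv, h2, InnerProductSpace.toDual_apply_apply]
  rw [this, EuclideanSpace.inner_single_right]
  simp

lemma grad_normsq {f : E → ℝ} {x : E} (hf : DifferentiableAt ℝ f x) :
    ‖gradient f x‖ ^ 2 = ∑ i, (Dv (EuclideanSpace.single i 1) f x) ^ 2 := by
  have h := EuclideanSpace.norm_eq (gradient f x)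
  rw [h, sq_sqrt (by positivity)]
  refine Finset.sum_congr rfl fun i _ => ?_
  rw [← grad_coord_s17 hf i]
  simp [Real.norm_eq_abs, sq_abs]

lemma grad_inner_sum {f g : E → ℝ} {x : E} (hf : DifferentiableAt ℝ f x)
    (hg : DifferentiableAt ℝ g x) :
    (∑ i, Dv (EuclideanSpace.single i 1) f x * Dv (EuclideanSpace.single i 1) g x)
      = inner ℝ (gradient f x) (gradient g x) := by
  rw [PiLp.inner_apply]
  refine Finset.sum_congr rfl fun i _ => ?_
  rw [← grad_coord_s17 hf i, ← grad_coord_s17 hg i]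
  simp [mul_comm]

end
section MainProof
local notation "sg" i => EuclideanSpace.single i (1:ℝ)

variable {n : ℕ}
local notation "E" => EuclideanSpace ℝ (Fin n)

lemma lap_eq (f : E → ℝ) (x : E) : lap f x = ∑ i, Dv (sg i) (Dv (sg i) f) x := rfl

set_option maxHeartbeats 2000000 in
/-- if `Δφ = |∇φ|² − V + λ₁` in `Ω`, `ρ ≥ 0` vanishes on `∂Ω`, and `ρ²Δφ`
attains its maximum over the closure of `Ω` at an interior point `x₀ ∈ Ω` where it is
positive, then at `x₀`:
`0 ≥ 2(ρΔρ − 3|∇ρ|²)(ρ²Δφ) + (2/n)(ρ²Δφ)² − 4(ρ²Δφ)|∇ρ|(√(ρ²Δφ) + ρ√((V − λ₁)₊)) − ρ⁴ΔV`. -/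
theorem cutoff_maximum_principle_inequality
    {n : ℕ} (Ω : Set (EuclideanSpace ℝ (Fin n)))
    (hΩopen : IsOpen Ω) (hΩbdd : Bornology.IsBounded Ω)
    (V φ ρ : EuclideanSpace ℝ (Fin n) → ℝ) (l₁ : ℝ)
    (hV : ContDiffOn ℝ (⊤ : ℕ∞) V (closure Ω))
    (hφ : ContDiffOn ℝ (⊤ : ℕ∞) φ (closure Ω))
    (hρ : ContDiffOn ℝ (⊤ : ℕ∞) ρ (closure Ω))
    (hρ_nonneg : ∀ x ∈ closure Ω, 0 ≤ ρ x)
    (hρ_bd : ∀ x ∈ frontier Ω, ρ x = 0)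
    (heq : ∀ x ∈ Ω, lap φ x = ‖gradient φ x‖ ^ 2 - V x + l₁)
    (x₀ : EuclideanSpace ℝ (Fin n)) (hx₀ : x₀ ∈ Ω)
    (hmax : ∀ y ∈ closure Ω, (ρ y) ^ 2 * lap φ y ≤ (ρ x₀) ^ 2 * lap φ x₀)
    (hpos : 0 < (ρ x₀) ^ 2 * lap φ x₀) :
    0 ≥ 2 * (ρ x₀ * lap ρ x₀ - 3 * ‖gradient ρ x₀‖ ^ 2) * ((ρ x₀) ^ 2 * lap φ x₀)
        + (2 / (n : ℝ)) * ((ρ x₀) ^ 2 * lap φ x₀) ^ 2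
        - 4 * ((ρ x₀) ^ 2 * lap φ x₀) * ‖gradient ρ x₀‖ *
            (Real.sqrt ((ρ x₀) ^ 2 * lap φ x₀) + ρ x₀ * Real.sqrt (max (V x₀ - l₁) 0))
        - (ρ x₀) ^ 4 * lap V x₀ := by
  classical
  -- dispose of n = 0
  rcases Nat.eq_zero_or_pos n with hn0 | hn0
  · exfalso; subst hn0; simp [lap] at hpos
  -- pointwise smoothness on Ω
  have hΩsub : Ω ⊆ closure Ω := subset_closure
  have hφa : ∀ y ∈ Ω, ContDiffAt ℝ (⊤ : ℕ∞) φ y := fun y hy =>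
    (hφ.mono hΩsub).contDiffAt (hΩopen.mem_nhds hy)
  have hVa : ∀ y ∈ Ω, ContDiffAt ℝ (⊤ : ℕ∞) V y := fun y hy =>
    (hV.mono hΩsub).contDiffAt (hΩopen.mem_nhds hy)
  have hρa : ∀ y ∈ Ω, ContDiffAt ℝ (⊤ : ℕ∞) ρ y := fun y hy =>
    (hρ.mono hΩsub).contDiffAt (hΩopen.mem_nhds hy)
  have hΩnhds : Ω ∈ nhds x₀ := hΩopen.mem_nhds hx₀
  -- the substitute for lap φ
  set G : EuclideanSpace ℝ (Fin n) → ℝ :=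
    fun y => (∑ j, Dv (sg j) φ y * Dv (sg j) φ y) - V y + l₁ with hGdef
  have hGeq : ∀ y ∈ Ω, lap φ y = G y := by
    intro y hy
    rw [heq y hy, hGdef]
    rw [grad_normsq ((hφa y hy).differentiableAt (by simp))]
    simp only [pow_two]
  have hGsm : ∀ y ∈ Ω, ContDiffAt ℝ (⊤ : ℕ∞) G y := by
    intro y hy
    apply ContDiffAt.add _ contDiffAt_const
    apply ContDiffAt.sub _ (hVa y hy)
    exact ContDiffAt.sum fun j _ => (contDiffAt_Dv (hφa y hy) _).mul (contDiffAt_Dv (hφa y hy) _)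
  -- F' : smooth version of ρ² lap φ
  set F : EuclideanSpace ℝ (Fin n) → ℝ := fun y => (ρ y * ρ y) * G y with hFdef
  have hFsm : ∀ y ∈ Ω, ContDiffAt ℝ (⊤ : ℕ∞) F y := fun y hy =>
    ((hρa y hy).mul (hρa y hy)).mul (hGsm y hy)
  have hFeqΩ : ∀ y ∈ Ω, ρ y ^ 2 * lap φ y = F y := by
    intro y hy; rw [hGeq y hy, hFdef]; ring
  have hlm : IsLocalMax F x₀ := by
    filter_upwards [hΩnhds] with y hy
    rw [← hFeqΩ y hy, ← hFeqΩ x₀ hx₀]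
    exact hmax y (hΩsub hy)
  have hgrad0 : ∀ v, Dv v F x₀ = 0 := by
    intro v; rw [Dv, hlm.fderiv_eq_zero]; rfl
  have hsec : ∀ i : Fin n, Dv (sg i) (Dv (sg i) F) x₀ ≤ 0 := fun i =>
    sdt_multi (hFsm x₀ hx₀) hlm _
  -- differentiability shorthands at points of Ω
  have dρ : ∀ y ∈ Ω, DifferentiableAt ℝ ρ y := fun y hy => (hρa y hy).differentiableAt (by simp)
  have dG : ∀ y ∈ Ω, DifferentiableAt ℝ G y := fun y hy => (hGsm y hy).differentiableAt (by simp)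
  have dV : ∀ y ∈ Ω, DifferentiableAt ℝ V y := fun y hy => (hVa y hy).differentiableAt (by simp)
  have dDρ : ∀ y ∈ Ω, ∀ v, DifferentiableAt ℝ (Dv v ρ) y := fun y hy v =>
    (contDiffAt_Dv (hρa y hy) v).differentiableAt (by simp)
  have dDG : ∀ y ∈ Ω, ∀ v, DifferentiableAt ℝ (Dv v G) y := fun y hy v =>
    (contDiffAt_Dv (hGsm y hy) v).differentiableAt (by simp)
  have dDφ : ∀ y ∈ Ω, ∀ v, DifferentiableAt ℝ (Dv v φ) y := fun y hy v =>
    (contDiffAt_Dv (hφa y hy) v).differentiableAt (by simp)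
  have dDDφ : ∀ y ∈ Ω, ∀ v w, DifferentiableAt ℝ (Dv v (Dv w φ)) y := fun y hy v w =>
    (contDiffAt_Dv (contDiffAt_Dv (hφa y hy) w) v).differentiableAt (by simp)
  have dDV : ∀ y ∈ Ω, ∀ v, DifferentiableAt ℝ (Dv v V) y := fun y hy v =>
    (contDiffAt_Dv (hVa y hy) v).differentiableAt (by simp)
  -- first derivative of F on Ω
  have hDF : ∀ y ∈ Ω, ∀ v, Dv v F y
      = (Dv v ρ y * ρ y + ρ y * Dv v ρ y) * G y + (ρ y * ρ y) * Dv v G y := by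
    intro y hy v
    rw [hFdef]
    rw [dv_mul ((dρ y hy).fun_mul (dρ y hy)) (dG y hy) v, dv_mul (dρ y hy) (dρ y hy) v]
  -- first derivative vanishes at x₀
  have hfirst : ∀ v, (Dv v ρ x₀ * ρ x₀ + ρ x₀ * Dv v ρ x₀) * G x₀
      + (ρ x₀ * ρ x₀) * Dv v G x₀ = 0 := by
    intro v; rw [← hDF x₀ hx₀ v]; exact hgrad0 v
  -- second derivative expansion at x₀
  have hsecond : ∀ i : Fin n, Dv (sg i) (Dv (sg i) F) x₀
      = 2 * (Dv (sg i) ρ x₀) ^ 2 * G x₀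
        + 2 * ρ x₀ * (Dv (sg i) (Dv (sg i) ρ) x₀) * G x₀
        + 4 * ρ x₀ * (Dv (sg i) ρ x₀) * (Dv (sg i) G x₀)
        + (ρ x₀ * ρ x₀) * (Dv (sg i) (Dv (sg i) G) x₀) := by
    intro i
    have hev : Dv (sg i) F =ᶠ[nhds x₀]
        (fun y => (Dv (sg i) ρ y * ρ y + ρ y * Dv (sg i) ρ y) * G y
          + (ρ y * ρ y) * Dv (sg i) G y) := by
      filter_upwards [hΩnhds] with y hy
      exact hDF y hy _
    rw [dv_congr hev]
    rw [dv_add ((((dDρ x₀ hx₀ _).fun_mul (dρ x₀ hx₀)).fun_add ((dρ x₀ hx₀).fun_mul (dDρ x₀ hx₀ _))).fun_mul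
        (dG x₀ hx₀)) (((dρ x₀ hx₀).fun_mul (dρ x₀ hx₀)).fun_mul (dDG x₀ hx₀ _))]
    rw [dv_mul (((dDρ x₀ hx₀ _).fun_mul (dρ x₀ hx₀)).fun_add ((dρ x₀ hx₀).fun_mul (dDρ x₀ hx₀ _)))
        (dG x₀ hx₀)]
    rw [dv_add ((dDρ x₀ hx₀ _).fun_mul (dρ x₀ hx₀)) ((dρ x₀ hx₀).fun_mul (dDρ x₀ hx₀ _))]
    rw [dv_mul (dDρ x₀ hx₀ _) (dρ x₀ hx₀), dv_mul (dρ x₀ hx₀) (dDρ x₀ hx₀ _)]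
    rw [dv_mul ((dρ x₀ hx₀).fun_mul (dρ x₀ hx₀)) (dDG x₀ hx₀ _), dv_mul (dρ x₀ hx₀) (dρ x₀ hx₀)]
    ring
  -- first derivative of G on Ω
  have hDG : ∀ y ∈ Ω, ∀ v, Dv v G y
      = (∑ j, (Dv v (Dv (sg j) φ) y * Dv (sg j) φ y + Dv (sg j) φ y * Dv v (Dv (sg j) φ) y))
        - Dv v V y := by
    intro y hy v
    rw [hGdef]
    rw [dv_add_const]
    rw [dv_sub (DifferentiableAt.fun_sum fun j _ => (dDφ y hy _).fun_mul (dDφ y hy _)) (dV y hy)]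
    rw [dv_sum (fun j _ => (dDφ y hy _).fun_mul (dDφ y hy _))]
    congr 1
    exact Finset.sum_congr rfl fun j _ => dv_mul (dDφ y hy _) (dDφ y hy _) v
  -- second derivative of G at x₀
  have hDDG : ∀ i : Fin n, Dv (sg i) (Dv (sg i) G) x₀
      = (∑ j, (Dv (sg i) (Dv (sg i) (Dv (sg j) φ)) x₀ * Dv (sg j) φ x₀
          + 2 * (Dv (sg i) (Dv (sg j) φ) x₀) ^ 2
          + Dv (sg j) φ x₀ * Dv (sg i) (Dv (sg i) (Dv (sg j) φ)) x₀))
        - Dv (sg i) (Dv (sg i) V) x₀ := by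
    intro i
    have hev : Dv (sg i) G =ᶠ[nhds x₀]
        (fun y => (∑ j, (Dv (sg i) (Dv (sg j) φ) y * Dv (sg j) φ y
            + Dv (sg j) φ y * Dv (sg i) (Dv (sg j) φ) y)) - Dv (sg i) V y) := by
      filter_upwards [hΩnhds] with y hy
      exact hDG y hy _
    rw [dv_congr hev]
    rw [dv_sub (DifferentiableAt.fun_sum fun j _ =>
        ((dDDφ x₀ hx₀ _ _).fun_mul (dDφ x₀ hx₀ _)).fun_add ((dDφ x₀ hx₀ _).fun_mul (dDDφ x₀ hx₀ _ _)))
      (dDV x₀ hx₀ _)]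
    rw [dv_sum (fun j _ =>
        ((dDDφ x₀ hx₀ _ _).fun_mul (dDφ x₀ hx₀ _)).fun_add ((dDφ x₀ hx₀ _).fun_mul (dDDφ x₀ hx₀ _ _)))]
    congr 1
    refine Finset.sum_congr rfl fun j _ => ?_
    rw [dv_add ((dDDφ x₀ hx₀ _ _).fun_mul (dDφ x₀ hx₀ _)) ((dDφ x₀ hx₀ _).fun_mul (dDDφ x₀ hx₀ _ _))]
    rw [dv_mul (dDDφ x₀ hx₀ _ _) (dDφ x₀ hx₀ _), dv_mul (dDφ x₀ hx₀ _) (dDDφ x₀ hx₀ _ _)]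
    ring
  -- third order symmetry
  have hthird : ∀ j : Fin n,
      (∑ i, Dv (sg i) (Dv (sg i) (Dv (sg j) φ)) x₀) = Dv (sg j) G x₀ := by
    intro j
    have e1 : ∀ i : Fin n, Dv (sg i) (Dv (sg i) (Dv (sg j) φ)) x₀
        = Dv (sg j) (Dv (sg i) (Dv (sg i) φ)) x₀ := by
      intro i
      have hev : Dv (sg i) (Dv (sg j) φ) =ᶠ[nhds x₀] Dv (sg j) (Dv (sg i) φ) := by
        filter_upwards [hΩnhds] with y hy
        exact clairaut (hφa y hy) (sg j) (sg i)
      calc Dv (sg i) (Dv (sg i) (Dv (sg j) φ)) x₀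
          = Dv (sg i) (Dv (sg j) (Dv (sg i) φ)) x₀ := dv_congr hev _
        _ = Dv (sg j) (Dv (sg i) (Dv (sg i) φ)) x₀ :=
            clairaut (contDiffAt_Dv (hφa x₀ hx₀) (sg i)) (sg j) (sg i)
    rw [Finset.sum_congr rfl (fun i _ => e1 i)]
    rw [← dv_sum (fun i _ => (contDiffAt_Dv (contDiffAt_Dv (hφa x₀ hx₀) _) _).differentiableAt
        (by simp)) (sg j)]
    apply dv_congr
    filter_upwards [hΩnhds] with y hy
    exact (lap_eq φ y) ▸ (hGeq y hy)
  -- basic positivity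
  have hr0 : 0 ≤ ρ x₀ := hρ_nonneg x₀ (hΩsub hx₀)
  have hGx : lap φ x₀ = G x₀ := hGeq x₀ hx₀
  have hlapφpos : 0 < lap φ x₀ := by nlinarith [sq_nonneg (ρ x₀)]
  have hGpos : 0 < G x₀ := hGx ▸ hlapφpos
  have hrpos : 0 < ρ x₀ := by
    rcases lt_or_eq_of_le hr0 with h | h
    · exact h
    · exfalso; rw [← h] at hpos; simp at hpos
  -- the pointwise term identity (using vanishing gradient)
  have hg : ∀ i : Fin n, (ρ x₀ * ρ x₀) * Dv (sg i) G x₀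
      = -(2 * ρ x₀ * Dv (sg i) ρ x₀ * G x₀) := by
    intro i
    have := hfirst (sg i)
    linarith
  have hterm : ∀ i : Fin n, (ρ x₀ * ρ x₀) * Dv (sg i) (Dv (sg i) F) x₀
      = (-6 * ρ x₀ ^ 2 * G x₀) * (Dv (sg i) ρ x₀) ^ 2
        + (2 * ρ x₀ ^ 3 * G x₀) * (Dv (sg i) (Dv (sg i) ρ) x₀)
        + ρ x₀ ^ 4 * (∑ j, (Dv (sg i) (Dv (sg i) (Dv (sg j) φ)) x₀ * Dv (sg j) φ x₀
            + 2 * (Dv (sg i) (Dv (sg j) φ) x₀) ^ 2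
            + Dv (sg j) φ x₀ * Dv (sg i) (Dv (sg i) (Dv (sg j) φ)) x₀))
        - ρ x₀ ^ 4 * (Dv (sg i) (Dv (sg i) V) x₀) := by
    intro i
    rw [hsecond i, hDDG i]
    linear_combination 4 * ρ x₀ * Dv (sg i) ρ x₀ * hg i
  -- sum of the second derivatives, multiplied by ρ²
  have hsum0 : (∑ i, (ρ x₀ * ρ x₀) * Dv (sg i) (Dv (sg i) F) x₀) ≤ 0 := by
    apply Finset.sum_nonpos
    intro i _
    exact mul_nonpos_of_nonneg_of_nonpos (by positivity) (hsec i)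
  have hsum1 : (∑ i, (ρ x₀ * ρ x₀) * Dv (sg i) (Dv (sg i) F) x₀)
      = (-6 * ρ x₀ ^ 2 * G x₀) * (∑ i, (Dv (sg i) ρ x₀) ^ 2)
        + (2 * ρ x₀ ^ 3 * G x₀) * (∑ i, Dv (sg i) (Dv (sg i) ρ) x₀)
        + ρ x₀ ^ 4 * (∑ i, ∑ j, (Dv (sg i) (Dv (sg i) (Dv (sg j) φ)) x₀ * Dv (sg j) φ x₀
            + 2 * (Dv (sg i) (Dv (sg j) φ) x₀) ^ 2
            + Dv (sg j) φ x₀ * Dv (sg i) (Dv (sg i) (Dv (sg j) φ)) x₀))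
        - ρ x₀ ^ 4 * (∑ i, Dv (sg i) (Dv (sg i) V) x₀) := by
    rw [Finset.sum_congr rfl (fun i _ => hterm i)]
    rw [Finset.sum_sub_distrib, Finset.sum_add_distrib, Finset.sum_add_distrib]
    rw [← Finset.mul_sum, ← Finset.mul_sum, ← Finset.mul_sum, ← Finset.mul_sum]
  -- the double sum: swap, use third-order symmetry and the vanishing gradient
  have hDS : ρ x₀ ^ 4 * (∑ i, ∑ j, (Dv (sg i) (Dv (sg i) (Dv (sg j) φ)) x₀ * Dv (sg j) φ x₀
        + 2 * (Dv (sg i) (Dv (sg j) φ) x₀) ^ 2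
        + Dv (sg j) φ x₀ * Dv (sg i) (Dv (sg i) (Dv (sg j) φ)) x₀))
      = 2 * ρ x₀ ^ 4 * (∑ i, ∑ j, (Dv (sg i) (Dv (sg j) φ) x₀) ^ 2)
        - 4 * ρ x₀ ^ 3 * G x₀ * (∑ j, Dv (sg j) φ x₀ * Dv (sg j) ρ x₀) := by
    have hsplit : (∑ i, ∑ j, (Dv (sg i) (Dv (sg i) (Dv (sg j) φ)) x₀ * Dv (sg j) φ x₀
          + 2 * (Dv (sg i) (Dv (sg j) φ) x₀) ^ 2
          + Dv (sg j) φ x₀ * Dv (sg i) (Dv (sg i) (Dv (sg j) φ)) x₀))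
        = (∑ i, ∑ j, 2 * (Dv (sg i) (Dv (sg j) φ) x₀) ^ 2)
          + (∑ i, ∑ j, 2 * (Dv (sg j) φ x₀ * Dv (sg i) (Dv (sg i) (Dv (sg j) φ)) x₀)) := by
      rw [← Finset.sum_add_distrib]
      refine Finset.sum_congr rfl fun i _ => ?_
      rw [← Finset.sum_add_distrib]
      exact Finset.sum_congr rfl fun j _ => by ring
    rw [hsplit]
    have hswap : (∑ i, ∑ j, 2 * (Dv (sg j) φ x₀ * Dv (sg i) (Dv (sg i) (Dv (sg j) φ)) x₀))
        = ∑ j, 2 * Dv (sg j) φ x₀ * Dv (sg j) G x₀ := by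
      rw [Finset.sum_comm]
      refine Finset.sum_congr rfl fun j _ => ?_
      rw [← hthird j, Finset.mul_sum]
      refine Finset.sum_congr rfl fun i _ => by ring
    rw [hswap]
    have hrepl : ρ x₀ ^ 4 * (∑ j, 2 * Dv (sg j) φ x₀ * Dv (sg j) G x₀)
        = -4 * ρ x₀ ^ 3 * G x₀ * (∑ j, Dv (sg j) φ x₀ * Dv (sg j) ρ x₀) := by
      rw [Finset.mul_sum, Finset.mul_sum]
      refine Finset.sum_congr rfl fun j _ => ?_
      linear_combination 2 * ρ x₀ ^ 2 * Dv (sg j) φ x₀ * hg j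
    rw [mul_add, hrepl]
    simp only [← Finset.mul_sum]
    ring
  -- master inequality
  have hmaster : 0 ≥ (-6 * ρ x₀ ^ 2 * G x₀) * (∑ i, (Dv (sg i) ρ x₀) ^ 2)
      + (2 * ρ x₀ ^ 3 * G x₀) * (∑ i, Dv (sg i) (Dv (sg i) ρ) x₀)
      + 2 * ρ x₀ ^ 4 * (∑ i, ∑ j, (Dv (sg i) (Dv (sg j) φ) x₀) ^ 2)
      - 4 * ρ x₀ ^ 3 * G x₀ * (∑ j, Dv (sg j) φ x₀ * Dv (sg j) ρ x₀)
      - ρ x₀ ^ 4 * (∑ i, Dv (sg i) (Dv (sg i) V) x₀) := by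
    have h0 := hsum0
    rw [hsum1, hDS] at h0
    linarith
  -- Cauchy–Schwarz for the Hessian trace
  have hn : (0:ℝ) < n := by exact_mod_cast hn0
  have hCS : (G x₀) ^ 2 ≤ (n:ℝ) * (∑ i, ∑ j, (Dv (sg i) (Dv (sg j) φ) x₀) ^ 2) := by
    have c1 : G x₀ = ∑ i, Dv (sg i) (Dv (sg i) φ) x₀ := by rw [← hGx]; exact lap_eq φ x₀
    have c2 : (∑ i, Dv (sg i) (Dv (sg i) φ) x₀) ^ 2
        ≤ (n:ℝ) * ∑ i, (Dv (sg i) (Dv (sg i) φ) x₀) ^ 2 := by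
      simpa using sq_sum_le_card_mul_sum_sq (s := Finset.univ)
        (f := fun i => Dv (sg i) (Dv (sg i) φ) x₀)
    have c3 : (∑ i, (Dv (sg i) (Dv (sg i) φ) x₀) ^ 2)
        ≤ ∑ i, ∑ j, (Dv (sg i) (Dv (sg j) φ) x₀) ^ 2 :=
      Finset.sum_le_sum fun i _ =>
        Finset.single_le_sum (f := fun j => (Dv (sg i) (Dv (sg j) φ) x₀) ^ 2)
          (fun j _ => sq_nonneg _) (Finset.mem_univ i)
    rw [c1]
    exact le_trans c2 (mul_le_mul_of_nonneg_left c3 hn.le)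
  -- inner product bound
  have hinner : (∑ j, Dv (sg j) φ x₀ * Dv (sg j) ρ x₀)
      ≤ ‖gradient φ x₀‖ * ‖gradient ρ x₀‖ := by
    rw [grad_inner_sum ((hφa x₀ hx₀).differentiableAt (by simp)) (dρ x₀ hx₀)]
    exact real_inner_le_norm _ _
  -- gradient of φ bound
  have hM0 : (0:ℝ) ≤ max (V x₀ - l₁) 0 := le_max_right _ _
  have hφb : ‖gradient φ x₀‖ ≤ Real.sqrt (G x₀) + Real.sqrt (max (V x₀ - l₁) 0) := by
    have h2 : ‖gradient φ x₀‖ ^ 2 = G x₀ + (V x₀ - l₁) := by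
      have := heq x₀ hx₀; rw [hGx] at this; linarith
    have e1 : Real.sqrt (G x₀) ^ 2 = G x₀ := Real.sq_sqrt hGpos.le
    have e2 : Real.sqrt (max (V x₀ - l₁) 0) ^ 2 = max (V x₀ - l₁) 0 := Real.sq_sqrt hM0
    have h3 : ‖gradient φ x₀‖ ^ 2
        ≤ (Real.sqrt (G x₀) + Real.sqrt (max (V x₀ - l₁) 0)) ^ 2 := by
      nlinarith [Real.sqrt_nonneg (G x₀), Real.sqrt_nonneg (max (V x₀ - l₁) 0),
        le_max_left (V x₀ - l₁) 0]
    have h4 := Real.sqrt_le_sqrt h3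
    rwa [Real.sqrt_sq (norm_nonneg _), Real.sqrt_sq (by positivity)] at h4
  -- sqrt computation
  have hsqrt : Real.sqrt (ρ x₀ ^ 2 * lap φ x₀) = ρ x₀ * Real.sqrt (G x₀) := by
    rw [hGx, Real.sqrt_mul (sq_nonneg (ρ x₀)), Real.sqrt_sq hr0]
  -- gradient of ρ
  have hnormρ : ‖gradient ρ x₀‖ ^ 2 = ∑ i, (Dv (sg i) ρ x₀) ^ 2 := grad_normsq (dρ x₀ hx₀)
  -- two comparison bounds
  have t1 : (2 / (n:ℝ)) * (ρ x₀ ^ 2 * G x₀) ^ 2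
      ≤ 2 * ρ x₀ ^ 4 * (∑ i, ∑ j, (Dv (sg i) (Dv (sg j) φ) x₀) ^ 2) := by
    have := mul_le_mul_of_nonneg_left hCS (by positivity : (0:ℝ) ≤ (2 / (n:ℝ)) * ρ x₀ ^ 4)
    calc (2 / (n:ℝ)) * (ρ x₀ ^ 2 * G x₀) ^ 2
        = (2 / (n:ℝ)) * ρ x₀ ^ 4 * (G x₀) ^ 2 := by ring
      _ ≤ (2 / (n:ℝ)) * ρ x₀ ^ 4 * ((n:ℝ) * (∑ i, ∑ j, (Dv (sg i) (Dv (sg j) φ) x₀) ^ 2)) := by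
          calc (2 / (n:ℝ)) * ρ x₀ ^ 4 * (G x₀) ^ 2
              = (2 / (n:ℝ)) * ρ x₀ ^ 4 * (G x₀) ^ 2 := rfl
            _ ≤ _ := by
                apply mul_le_mul_of_nonneg_left hCS (by positivity)
      _ = 2 * ρ x₀ ^ 4 * (∑ i, ∑ j, (Dv (sg i) (Dv (sg j) φ) x₀) ^ 2) := by
          field_simp
  have t2 : 4 * ρ x₀ ^ 3 * G x₀ * (∑ j, Dv (sg j) φ x₀ * Dv (sg j) ρ x₀)
      ≤ 4 * ρ x₀ ^ 3 * G x₀ * (‖gradient ρ x₀‖ *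
          (Real.sqrt (G x₀) + Real.sqrt (max (V x₀ - l₁) 0))) := by
    apply mul_le_mul_of_nonneg_left _ (by positivity)
    calc (∑ j, Dv (sg j) φ x₀ * Dv (sg j) ρ x₀)
        ≤ ‖gradient φ x₀‖ * ‖gradient ρ x₀‖ := hinner
      _ ≤ (Real.sqrt (G x₀) + Real.sqrt (max (V x₀ - l₁) 0)) * ‖gradient ρ x₀‖ :=
          mul_le_mul_of_nonneg_right hφb (norm_nonneg _)
      _ = ‖gradient ρ x₀‖ * (Real.sqrt (G x₀) + Real.sqrt (max (V x₀ - l₁) 0)) := by ring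
  -- final assembly
  rw [ge_iff_le, hsqrt, hGx, lap_eq ρ x₀, lap_eq V x₀, hnormρ]
  have d1 : 2 * (ρ x₀ * (∑ i, Dv (sg i) (Dv (sg i) ρ) x₀)
        - 3 * (∑ i, (Dv (sg i) ρ x₀) ^ 2)) * (ρ x₀ ^ 2 * G x₀)
      = (-6 * ρ x₀ ^ 2 * G x₀) * (∑ i, (Dv (sg i) ρ x₀) ^ 2)
        + (2 * ρ x₀ ^ 3 * G x₀) * (∑ i, Dv (sg i) (Dv (sg i) ρ) x₀) := by ring
  have d2 : 4 * (ρ x₀ ^ 2 * G x₀) * ‖gradient ρ x₀‖ *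
        (ρ x₀ * Real.sqrt (G x₀) + ρ x₀ * Real.sqrt (max (V x₀ - l₁) 0))
      = 4 * ρ x₀ ^ 3 * G x₀ * (‖gradient ρ x₀‖ *
        (Real.sqrt (G x₀) + Real.sqrt (max (V x₀ - l₁) 0))) := by ring
  rw [d1, d2]
  refine le_trans ?_ hmaster
  gcongr ?_ + ?_ - ?_ - ?_ <;>
    first
      | exact le_refl _
      | exact t1
      | exact t2

end MainProof
end
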